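/- arXiv:math-ph/0510079 — 5 statements merged into one kernel-verified Lean document; each statement's English description precedes it below -/
import Mathlib

section
/- Let A ∈ Sp(2d,ℤ) with A ≡ −I (mod 4). Define the operator F = ∑_n T_N(n) ∘ T_N(−nA) on H_N, where the sum ranges over the N^{2d} vectors n ∈ {0,1,…,N−1}^{2d}. Then F ∘ F* = N^{2d} · κ · Id, where κ = #{n ∈ (ℤ/Nℤ)^{2d} : n(A−I) ≡ 0 (mod N)}; in particular F ≠ 0. -/
open scoped BigOperators

/-- `e_M(t) = exp(2πi t / M)`. -/
noncomputable def eM (M : ℕ) (t : ℤ) : ℂ :=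
  Complex.exp (2 * Real.pi * Complex.I * (t : ℂ) / (M : ℂ))

/-- The inner product `⟨ψ,φ⟩ = N^{-d} ∑_x ψ(x) conj(φ(x))` on `H_N`. -/
noncomputable def hip (d N : ℕ) [NeZero N] (ψ φ : (Fin d → ZMod N) → ℂ) : ℂ :=
  ((N : ℂ) ^ d)⁻¹ * ∑ x : Fin d → ZMod N, ψ x * (starRingEnd ℂ) (φ x)

/-- The twisted elementary operator `T_N(n)`:
`(T_N(n)ψ)(y) = (−1)^{N n₁·n₂} e_{2N}(n₁·n₂) e_N(n₂·y) ψ(y+n₁)`. -/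
noncomputable def Tq (d N : ℕ) (n : (Fin d ⊕ Fin d) → ℤ) :
    ((Fin d → ZMod N) → ℂ) →ₗ[ℂ] ((Fin d → ZMod N) → ℂ) where
  toFun ψ := fun y =>
    (-1 : ℂ) ^ ((N : ℤ) * ∑ i : Fin d, n (Sum.inl i) * n (Sum.inr i)) *
      eM (2 * N) (∑ i : Fin d, n (Sum.inl i) * n (Sum.inr i)) *
      eM N (∑ i : Fin d, n (Sum.inr i) * ((y i).val : ℤ)) *
      ψ (fun i => y i + (n (Sum.inl i) : ZMod N))
  map_add' ψ φ := by funext y; simp [Pi.add_apply]; ring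
  map_smul' c ψ := by funext y; simp [Pi.smul_apply, smul_eq_mul]; ring

/-- The standard symplectic matrix `J = [[0, I],[−I, 0]]` over `ℤ`. -/
def Jz (d : ℕ) : Matrix (Fin d ⊕ Fin d) (Fin d ⊕ Fin d) ℤ :=
  Matrix.fromBlocks 0 1 (-1) 0
section EMlemmas

lemma eM_add (M : ℕ) (a b : ℤ) : eM M (a + b) = eM M a * eM M b := by
  rw [eM, eM, eM, ← Complex.exp_add]
  congr 1
  push_cast
  ring

lemma eM_zero (M : ℕ) : eM M 0 = 1 := by simp [eM]

lemma eM_intCast_mul (M : ℕ) (k : ℤ) : eM M ((M : ℤ) * k) = 1 := by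
  rcases Nat.eq_zero_or_pos M with h | h
  · simp [h, eM]
  · rw [eM]
    have hM : (M : ℂ) ≠ 0 := by exact_mod_cast h.ne'
    have : 2 * (Real.pi : ℂ) * Complex.I * ((((M : ℤ) * k : ℤ)) : ℂ) / (M : ℂ)
        = (k : ℂ) * (2 * (Real.pi : ℂ) * Complex.I) := by
      push_cast
      field_simp
    rw [this, Complex.exp_int_mul_two_pi_mul_I]

lemma eM_congr (M : ℕ) {a b : ℤ} (h : a ≡ b [ZMOD (M : ℤ)]) : eM M a = eM M b := by
  have hd : (M : ℤ) ∣ b - a := Int.ModEq.dvd h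
  obtain ⟨k, hk⟩ := hd
  have : b = a + (M : ℤ) * k := by linarith
  rw [this, eM_add, eM_intCast_mul, mul_one]

lemma eM_dvd_eq_one (M : ℕ) {a : ℤ} (h : (M : ℤ) ∣ a) : eM M a = 1 := by
  obtain ⟨k, rfl⟩ := h
  exact eM_intCast_mul M k

lemma neg_one_zpow_eq_eM (k : ℤ) : (-1 : ℂ) ^ k = eM 2 k := by
  rw [eM]
  have h1 : (-1 : ℂ) = Complex.exp ((Real.pi : ℂ) * Complex.I) := Complex.exp_pi_mul_I.symm
  rw [h1, ← Complex.exp_int_mul]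
  congr 1
  have : (2 : ℂ) ≠ 0 := two_ne_zero
  field_simp
  ring

lemma eM_two_eq (N : ℕ) (hN : N ≠ 0) (k : ℤ) : eM 2 k = eM (2 * N) ((N : ℤ) * k) := by
  rw [eM, eM]
  congr 1
  have h2 : ((2 * N : ℕ) : ℂ) ≠ 0 := by
    exact_mod_cast Nat.mul_ne_zero two_ne_zero hN
  have hN' : (N : ℂ) ≠ 0 := by exact_mod_cast hN
  push_cast at h2 ⊢
  field_simp

lemma eM_double (N : ℕ) (hN : N ≠ 0) (k : ℤ) : eM N k = eM (2 * N) (2 * k) := by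
  rw [eM, eM]
  congr 1
  have h2 : ((2 * N : ℕ) : ℂ) ≠ 0 := by
    exact_mod_cast Nat.mul_ne_zero two_ne_zero hN
  have hN' : (N : ℂ) ≠ 0 := by exact_mod_cast hN
  push_cast at h2 ⊢
  field_simp

lemma eM_sum {ι : Type*} (M : ℕ) (s : Finset ι) (f : ι → ℤ) :
    eM M (∑ i ∈ s, f i) = ∏ i ∈ s, eM M (f i) := by
  classical
  induction s using Finset.induction_on with
  | empty => simp [eM]
  | insert a s h ih => rw [Finset.sum_insert h, Finset.prod_insert h, eM_add, ih]

lemma eM_eq_one_iff (N : ℕ) (hN : N ≠ 0) (w : ℤ) : eM N w = 1 ↔ (N : ℤ) ∣ w := by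
  constructor
  · intro h
    rw [eM, Complex.exp_eq_one_iff] at h
    obtain ⟨n, hn⟩ := h
    have hNc : (N : ℂ) ≠ 0 := by exact_mod_cast hN
    have hpi : (Real.pi : ℂ) ≠ 0 := by exact_mod_cast Real.pi_ne_zero
    have hI : Complex.I ≠ 0 := Complex.I_ne_zero
    refine ⟨n, ?_⟩
    have : (w : ℂ) = (n : ℂ) * (N : ℂ) := by
      field_simp at hn
      have h2 : (2 : ℂ) ≠ 0 := two_ne_zero
      -- hn : 2 * π * I * w = n * (2 * π * I) * N  (roughly)
      apply mul_left_cancel₀ (mul_ne_zero (mul_ne_zero h2 hpi) hI)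
      ring_nf
      ring_nf at hn
      linear_combination (2 * (Real.pi : ℂ) * Complex.I) * hn
    have : w = n * (N:ℤ) := by exact_mod_cast this
    linarith
  · exact eM_dvd_eq_one N

lemma eM_geom_sum (N : ℕ) [NeZero N] (w : ℤ) :
    ∑ x : ZMod N, eM N ((x.val : ℤ) * w) = if (N : ℤ) ∣ w then (N : ℂ) else 0 := by
  have hN : N ≠ 0 := NeZero.ne N
  have key : ∀ v : ℕ, eM N ((v : ℤ) * w) = (eM N w) ^ v := by
    intro v
    rw [eM, eM, ← Complex.exp_nat_mul]
    congr 1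
    push_cast
    ring
  have hsum : ∑ x : ZMod N, eM N ((x.val : ℤ) * w) = ∑ j ∈ Finset.range N, (eM N w) ^ j := by
    rw [Finset.sum_congr rfl (fun x _ => key x.val)]
    refine Finset.sum_nbij' (i := fun x => x.val) (j := fun j => (j : ZMod N)) ?_ ?_ ?_ ?_ ?_
    · intro x _; exact Finset.mem_range.mpr (ZMod.val_lt x)
    · intro j _; exact Finset.mem_univ _
    · intro x _; exact (ZMod.natCast_rightInverse x)
    · intro j hj; exact ZMod.val_cast_of_lt (Finset.mem_range.mp hj)
    · intro x _; rfl
  rw [hsum]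
  by_cases hdvd : (N : ℤ) ∣ w
  · simp [eM_dvd_eq_one N hdvd, hdvd]
  · have hne : eM N w ≠ 1 := fun h => hdvd ((eM_eq_one_iff N hN w).mp h)
    rw [geom_sum_eq hne, if_neg hdvd]
    have hpow : (eM N w) ^ N = 1 := by
      rw [← key N]
      exact eM_intCast_mul N w
    rw [hpow, sub_self, zero_div]

end EMlemmas
section Certs

open Sum

variable (d N : ℕ)

/-- pointwise exponent of the fourfold product -/
def Xe (a b c e : (Fin d ⊕ Fin d) → ℤ) : Fin d → ℤ := fun i =>
  (1 + (N:ℤ)^2) * (a (inl i) * a (inr i)) + 2*((b (inr i) + c (inr i) + e (inr i)) * a (inl i))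
  + ((1 + (N:ℤ)^2) * (b (inl i) * b (inr i)) + 2*((c (inr i) + e (inr i)) * b (inl i)))
  + ((1 + (N:ℤ)^2) * (c (inl i) * c (inr i)) + 2*(e (inr i) * c (inl i)))
  + (1 + (N:ℤ)^2) * (e (inl i) * e (inr i))

/-- pointwise invariance certificate -/
lemma Xe_inv (p ν u w q s : (Fin d ⊕ Fin d) → ℤ) (i : Fin d) :
    Xe d N (p + (N:ℤ) • ν)
      (-(fun j => ((-(p j) + 4 * u j) + (N:ℤ) * (-(ν j) + 4 * w j))))
      (fun j => -(q j) + 4 * s j) (-q) i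
    = Xe d N p (-(fun j => -(p j) + 4 * u j)) (fun j => -(q j) + 4 * s j) (-q) i
      + 2 * (N:ℤ) * (1 * ((N:ℤ)) * ((N:ℤ)) * ((N:ℤ)) * (ν (inl i)) * (ν (inr i)) + -2 * ((N:ℤ)) * ((N:ℤ)) * ((N:ℤ)) * (ν (inl i)) * (w (inr i)) + -2 * ((N:ℤ)) * ((N:ℤ)) * ((N:ℤ)) * (ν (inr i)) * (w (inl i)) + 8 * ((N:ℤ)) * ((N:ℤ)) * ((N:ℤ)) * (w (inl i)) * (w (inr i)) + 1 * ((N:ℤ)) * ((N:ℤ)) * (p (inl i)) * (ν (inr i)) + -2 * ((N:ℤ)) * ((N:ℤ)) * (p (inl i)) * (w (inr i)) + 1 * ((N:ℤ)) * ((N:ℤ)) * (p (inr i)) * (ν (inl i)) + -2 * ((N:ℤ)) * ((N:ℤ)) * (p (inr i)) * (w (inl i)) + -2 * ((N:ℤ)) * ((N:ℤ)) * (u (inl i)) * (ν (inr i)) + 8 * ((N:ℤ)) * ((N:ℤ)) * (u (inl i)) * (w (inr i)) + -2 * ((N:ℤ)) * ((N:ℤ)) * (u (inr i)) * (ν (inl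 i)) + 8 * ((N:ℤ)) * ((N:ℤ)) * (u (inr i)) * (w (inl i)) + 2 * ((N:ℤ)) * (ν (inl i)) * (ν (inr i)) + -6 * ((N:ℤ)) * (ν (inl i)) * (w (inr i)) + -2 * ((N:ℤ)) * (ν (inr i)) * (w (inl i)) + 8 * ((N:ℤ)) * (w (inl i)) * (w (inr i)) + 2 * (p (inl i)) * (ν (inr i)) + -6 * (p (inl i)) * (w (inr i)) + 2 * (p (inr i)) * (ν (inl i)) + -2 * (p (inr i)) * (w (inl i)) + -4 * (q (inr i)) * (ν (inl i)) + 8 * (q (inr i)) * (w (inl i)) + 8 * (s (inr i)) * (ν (inl i)) + -16 * (s (inr i)) * (w (inl i)) + -2 * (u (inl i)) * (ν (inr i)) + 8 * (u (inl i)) * (w (inr i)) + -6 * (u (inr i)) * (ν (inl i)) + 8 * (u (inr i)) * (w (inl i))) := by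
  simp only [Xe, Pi.add_apply, Pi.neg_apply, Pi.smul_apply, smul_eq_mul]
  ring

/-- pointwise split certificate -/
lemma Xe_split (m t s v : (Fin d ⊕ Fin d) → ℤ) (i : Fin d) :
    Xe d N (m + t)
      (-(fun j => ((-(m j) + 4 * s j) + (-(t j) + 4 * v j))))
      (fun j => -(m j) + 4 * s j) (-m) i
    = (2 * ((N:ℤ)) * ((N:ℤ)) * (t (inl i)) * (t (inr i)) + -4 * ((N:ℤ)) * ((N:ℤ)) * (t (inl i)) * (v (inr i)) + -4 * ((N:ℤ)) * ((N:ℤ)) * (t (inr i)) * (v (inl i)) + 16 * ((N:ℤ)) * ((N:ℤ)) * (v (inl i)) * (v (inr i)) + 4 * (t (inl i)) * (t (inr i)) + -12 * (t (inl i)) * (v (inr i)) + -4 * (t (inr i)) * (v (inl i)) + 16 * (v (inl i)) * (v (inr i)))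
      + 2 * (m (inl i) * (2 * t (inr i) - 4 * v (inr i)) - m (inr i) * (2 * t (inl i) - 4 * v (inl i)))
      + 2 * (N:ℤ) * (2 * ((N:ℤ)) * (m (inl i)) * (m (inr i)) + -4 * ((N:ℤ)) * (m (inl i)) * (s (inr i)) + 1 * ((N:ℤ)) * (m (inl i)) * (t (inr i)) + -2 * ((N:ℤ)) * (m (inl i)) * (v (inr i)) + -4 * ((N:ℤ)) * (m (inr i)) * (s (inl i)) + 1 * ((N:ℤ)) * (m (inr i)) * (t (inl i)) + -2 * ((N:ℤ)) * (m (inr i)) * (v (inl i)) + 16 * ((N:ℤ)) * (s (inl i)) * (s (inr i)) + -2 * ((N:ℤ)) * (s (inl i)) * (t (inr i)) + 8 * ((N:ℤ)) * (s (inl i)) * (v (inr i)) + -2 * ((N:ℤ)) * (s (inr i)) * (t (inl i)) + 8 * ((N:ℤ)) * (s (inr i)) * (v (inl i)))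
      + (((-(m (inl i)) + 4 * s (inl i)) * (-(t (inr i)) + 4 * v (inr i))
          - (-(m (inr i)) + 4 * s (inr i)) * (-(t (inl i)) + 4 * v (inl i)))
         - (m (inl i) * t (inr i) - m (inr i) * t (inl i))) := by
  simp only [Xe, Pi.add_apply, Pi.neg_apply]
  ring

/-- the `t`-only part of the split -/
def CtE (t v : (Fin d ⊕ Fin d) → ℤ) : Fin d → ℤ := fun i => (2 * ((N:ℤ)) * ((N:ℤ)) * (t (inl i)) * (t (inr i)) + -4 * ((N:ℤ)) * ((N:ℤ)) * (t (inl i)) * (v (inr i)) + -4 * ((N:ℤ)) * ((N:ℤ)) * (t (inr i)) * (v (inl i)) + 16 * ((N:ℤ)) * ((N:ℤ)) * (v (inl i)) * (v (inr i)) + 4 * (t (inl i)) * (t (inr i)) + -12 * (t (inl i)) * (v (inr i)) + -4 * (t (inr i)) * (v (inl i)) + 16 * (v (inl i)) * (v (inr i)))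

lemma CtE_dvd_even (M : ℕ) (hM : N = 2 * M) (t v g : (Fin d ⊕ Fin d) → ℤ)
    (hg : ∀ j, 2 * t j - 4 * v j = (N:ℤ) * g j) (i : Fin d) :
    (2 * (N:ℤ)) ∣ CtE d N t v i := by
  have h1 : t (inl i) = (M:ℤ) * g (inl i) + 2 * v (inl i) := by
    have := hg (inl i); rw [hM] at this; push_cast at this ⊢; linarith
  have h2 : t (inr i) = (M:ℤ) * g (inr i) + 2 * v (inr i) := by
    have := hg (inr i); rw [hM] at this; push_cast at this ⊢; linarith
  refine ⟨(2 * ((M:ℤ)) * ((M:ℤ)) * ((M:ℤ)) * (g (inl i)) * (g (inr i)) + 1 * ((M:ℤ)) * (g (inl i)) * (g (inr i)) + 8 * ((M:ℤ)) * (v (inl i)) * (v (inr i)) + -1 * (g (inl i)) * (v (inr i)) + 1 * (g (inr i)) * (v (inl i))), ?_⟩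
  rw [CtE, h1, h2, hM]
  push_cast
  ring

lemma CtE_dvd_odd (M : ℕ) (hM : N = 2 * M + 1) (t v g : (Fin d ⊕ Fin d) → ℤ)
    (hg : ∀ j, 2 * t j - 4 * v j = (N:ℤ) * g j) (i : Fin d) :
    (2 * (N:ℤ)) ∣ CtE d N t v i := by
  have hNo : (N:ℤ) = 2 * (M:ℤ) + 1 := by exact_mod_cast hM
  have hodd : ¬ (2:ℤ) ∣ (N:ℤ) := by omega
  have hge : ∀ j, ∃ gj : ℤ, g j = 2 * gj := by
    intro j
    have h := hg j
    have h2 : (2:ℤ) ∣ (N:ℤ) * g j := ⟨t j - 2 * v j, by linarith⟩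
    rcases (Int.prime_two.dvd_mul.mp h2) with h' | h'
    · exact absurd h' hodd
    · obtain ⟨c, hc⟩ := h'
      exact ⟨c, hc⟩
  obtain ⟨G1, hG1⟩ := hge (inl i)
  obtain ⟨G2, hG2⟩ := hge (inr i)
  have h1 : t (inl i) = (N:ℤ) * G1 + 2 * v (inl i) := by
    have := hg (inl i); rw [hG1] at this; linarith
  have h2 : t (inr i) = (N:ℤ) * G2 + 2 * v (inr i) := by
    have := hg (inr i); rw [hG2] at this; linarith
  refine ⟨(8 * ((M:ℤ)) * ((M:ℤ)) * ((M:ℤ)) * (G1) * (G2) + 12 * ((M:ℤ)) * ((M:ℤ)) * (G1) * (G2) + 10 * ((M:ℤ)) * (G1) * (G2) + 8 * ((M:ℤ)) * (v (inl i)) * (v (inr i)) + 3 * (G1) * (G2) + -2 * (G1) * (v (inr i)) + 2 * (G2) * (v (inl i)) + 4 * (v (inl i)) * (v (inr i))), ?_⟩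
  rw [CtE, h1, h2, hNo]
  push_cast
  ring

end Certs
section Ops

open Sum

variable (d N : ℕ) [NeZero N]

/-- normal form operator shape -/
noncomputable def NFc (c : ℂ) (w : (Fin d ⊕ Fin d) → ℤ) (ψ : (Fin d → ZMod N) → ℂ) :
    (Fin d → ZMod N) → ℂ := fun y =>
  c * eM N (∑ i : Fin d, w (inr i) * ((y i).val : ℤ)) *
    ψ (fun i => y i + (w (inl i) : ZMod N))

lemma zval (z : ZMod N) : (((z.val : ℤ)) : ZMod N) = z := by
  push_cast
  rw [ZMod.natCast_val, ZMod.cast_id]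

lemma TqNF (a : (Fin d ⊕ Fin d) → ℤ) (ψ : (Fin d → ZMod N) → ℂ) :
    Tq d N a ψ =
      NFc d N (eM (2 * N) (∑ i : Fin d, (1 + (N : ℤ) ^ 2) * (a (inl i) * a (inr i)))) a ψ := by
  have hN := NeZero.ne N
  funext y
  show (-1 : ℂ) ^ ((N : ℤ) * ∑ i : Fin d, a (inl i) * a (inr i)) *
      eM (2 * N) (∑ i : Fin d, a (inl i) * a (inr i)) * _ * _ = _
  rw [NFc]
  rw [neg_one_zpow_eq_eM, eM_two_eq N hN, ← eM_add]
  congr 2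
  rw [Finset.mul_sum, Finset.mul_sum, ← Finset.sum_add_distrib]
  congr 1
  exact Finset.sum_congr rfl fun i _ => by ring

lemma NF_comp (a w : (Fin d ⊕ Fin d) → ℤ) (c : ℂ) (ψ : (Fin d → ZMod N) → ℂ) :
    Tq d N a (NFc d N c w ψ) =
      NFc d N
        (eM (2 * N) (∑ i : Fin d,
          ((1 + (N : ℤ) ^ 2) * (a (inl i) * a (inr i)) + 2 * (w (inr i) * a (inl i)))) * c)
        (a + w) ψ := by
  have hN := NeZero.ne N
  rw [TqNF]
  funext y
  rw [NFc, NFc, NFc]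
  have harg : (fun i => (fun j => y j + (a (inl j) : ZMod N)) i + (w (inl i) : ZMod N))
      = fun i => y i + (((a + w) (inl i) : ℤ) : ZMod N) := by
    funext i
    show y i + _ + _ = y i + _
    rw [Pi.add_apply]
    push_cast
    ring
  rw [harg]
  have hval : eM N (∑ i : Fin d, w (inr i) * ((((fun j => y j + (a (inl j) : ZMod N)) i).val : ℤ)))
      = eM N (∑ i : Fin d, w (inr i) * ((y i).val : ℤ)) *
          eM N (∑ i : Fin d, w (inr i) * a (inl i)) := by
    rw [← eM_add]
    apply eM_congr
    rw [← Finset.sum_add_distrib]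
    rw [← ZMod.intCast_eq_intCast_iff]
    push_cast
    refine Finset.sum_congr rfl fun i _ => ?_
    have h1 := zval N ((y i + (a (inl i) : ZMod N)))
    have h2 := zval N (y i)
    push_cast at h1 h2
    rw [h1, h2]
    ring
  rw [hval]
  have hE : eM N (∑ i : Fin d, w (inr i) * a (inl i))
      = eM (2 * N) (∑ i : Fin d, 2 * (w (inr i) * a (inl i))) := by
    rw [eM_double N hN, Finset.mul_sum]
  have hy : eM N (∑ i : Fin d, a (inr i) * ((y i).val : ℤ)) *
        eM N (∑ i : Fin d, w (inr i) * ((y i).val : ℤ))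
      = eM N (∑ i : Fin d, (a + w) (inr i) * ((y i).val : ℤ)) := by
    rw [← eM_add, ← Finset.sum_add_distrib]
    congr 1
    refine Finset.sum_congr rfl fun i _ => ?_
    rw [Pi.add_apply]
    ring
  rw [hE]
  have hsplit : eM (2 * N) (∑ i : Fin d,
        ((1 + (N : ℤ) ^ 2) * (a (inl i) * a (inr i)) + 2 * (w (inr i) * a (inl i))))
      = eM (2 * N) (∑ i : Fin d, (1 + (N : ℤ) ^ 2) * (a (inl i) * a (inr i))) *
        eM (2 * N) (∑ i : Fin d, 2 * (w (inr i) * a (inl i))) := by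
    rw [← eM_add, ← Finset.sum_add_distrib]
  rw [hsplit, ← hy]
  ring
lemma four_comp (a b c e : (Fin d ⊕ Fin d) → ℤ) (ψ : (Fin d → ZMod N) → ℂ) :
    Tq d N a (Tq d N b (Tq d N c (Tq d N e ψ))) =
      NFc d N (eM (2 * N) (∑ i : Fin d, Xe d N a b c e i)) (a + b + c + e) ψ := by
  rw [TqNF d N e, NF_comp, NF_comp, NF_comp]
  have hw : a + (b + (c + e)) = a + b + c + e := by funext j; simp [Pi.add_apply]; ring
  rw [hw]
  refine congrArg (fun z => NFc d N z (a + b + c + e) ψ) ?_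
  rw [← eM_add, ← Finset.sum_add_distrib, ← eM_add, ← Finset.sum_add_distrib,
    ← eM_add, ← Finset.sum_add_distrib]
  congr 1
  refine Finset.sum_congr rfl fun i _ => ?_
  simp only [Xe, Pi.add_apply]
  ring

lemma NFc_w_congr (c : ℂ) (w w' : (Fin d ⊕ Fin d) → ℤ)
    (h : ∀ j, ((w j : ℤ) : ZMod N) = ((w' j : ℤ) : ZMod N)) (ψ : (Fin d → ZMod N) → ℂ) :
    NFc d N c w ψ = NFc d N c w' ψ := by
  funext y
  rw [NFc, NFc]
  have h1 : eM N (∑ i : Fin d, w (Sum.inr i) * ((y i).val : ℤ))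
      = eM N (∑ i : Fin d, w' (Sum.inr i) * ((y i).val : ℤ)) := by
    apply eM_congr
    rw [← ZMod.intCast_eq_intCast_iff]
    push_cast
    exact Finset.sum_congr rfl fun i _ => by rw [h (Sum.inr i)]
  have h2 : (fun i => y i + ((w (Sum.inl i) : ℤ) : ZMod N))
      = fun i => y i + ((w' (Sum.inl i) : ℤ) : ZMod N) := by
    funext i; rw [h (Sum.inl i)]
  rw [h1, h2]

lemma NFc_trivial (c : ℂ) (w : (Fin d ⊕ Fin d) → ℤ)
    (h : ∀ j, (N : ℤ) ∣ w j) (ψ : (Fin d → ZMod N) → ℂ) (y : Fin d → ZMod N) :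
    NFc d N c w ψ y = c * ψ y := by
  rw [NFc]
  have h1 : eM N (∑ i : Fin d, w (Sum.inr i) * ((y i).val : ℤ)) = 1 := by
    apply eM_dvd_eq_one
    exact Finset.dvd_sum fun i _ => Dvd.dvd.mul_right (h (Sum.inr i)) _
  have h2 : (fun i => y i + ((w (Sum.inl i) : ℤ) : ZMod N)) = y := by
    funext i
    have : ((w (Sum.inl i) : ℤ) : ZMod N) = 0 :=
      (ZMod.intCast_zmod_eq_zero_iff_dvd _ _).mpr (h (Sum.inl i))
    rw [this, add_zero]
  rw [h1, h2, mul_one]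

/-- mod-4 structure of `vecMul` -/
lemma A4_sub {A : Matrix (Fin d ⊕ Fin d) (Fin d ⊕ Fin d) ℤ}
    (hA4 : A.map (Int.cast : ℤ → ZMod 4) = -1) (v : (Fin d ⊕ Fin d) → ℤ) :
    Matrix.vecMul v A = fun j => -(v j) + 4 * ((Matrix.vecMul v A j + v j) / 4) := by
  have hdvd : ∀ j, (4 : ℤ) ∣ (Matrix.vecMul v A j + v j) := by
    intro j
    have hcast : ((Matrix.vecMul v A j : ℤ) : ZMod 4) = -(v j : ZMod 4) := by
      rw [Matrix.vecMul]
      have h0 : ((dotProduct v (fun k => A k j) : ℤ) : ZMod 4)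
          = ∑ k, ((v k : ZMod 4) * (A k j : ZMod 4)) := by
        rw [dotProduct]
        push_cast
        rfl
      rw [h0]
      have hAij : ∀ k, ((A k j : ℤ) : ZMod 4) = if k = j then -1 else 0 := by
        intro k
        have := congrFun (congrFun hA4 k) j
        rw [Matrix.map_apply] at this
        rw [this]
        by_cases hkj : k = j
        · subst hkj; simp [Matrix.one_apply]
        · simp [Matrix.one_apply, hkj]
      rw [Finset.sum_congr rfl fun k _ => by rw [hAij k]]
      simp [Finset.sum_ite_eq']
    have hz : ((Matrix.vecMul v A j + v j : ℤ) : ZMod 4) = 0 := by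
      push_cast
      push_cast at hcast
      rw [hcast]
      ring
    exact_mod_cast (ZMod.intCast_zmod_eq_zero_iff_dvd _ 4).mp hz
  funext j
  have h := hdvd j
  show Matrix.vecMul v A j = -(v j) + 4 * ((Matrix.vecMul v A j + v j) / 4)
  omega

/-- symplectic invariance of the form -/
lemma symp_inv {A : Matrix (Fin d ⊕ Fin d) (Fin d ⊕ Fin d) ℤ}
    (hA : A * Jz d * A.transpose = Jz d) (m t : (Fin d ⊕ Fin d) → ℤ) :
    ∑ i : Fin d, (Matrix.vecMul m A (Sum.inl i) * Matrix.vecMul t A (Sum.inr i)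
      - Matrix.vecMul m A (Sum.inr i) * Matrix.vecMul t A (Sum.inl i))
    = ∑ i : Fin d, (m (Sum.inl i) * t (Sum.inr i) - m (Sum.inr i) * t (Sum.inl i)) := by
  have key : ∀ u v : (Fin d ⊕ Fin d) → ℤ,
      ∑ i : Fin d, (u (Sum.inl i) * v (Sum.inr i) - u (Sum.inr i) * v (Sum.inl i))
      = dotProduct u ((Jz d).mulVec v) := by
    intro u v
    have hmv : (Jz d).mulVec v = Sum.elim (v ∘ Sum.inr) (-(v ∘ Sum.inl)) := by
      rw [Jz, Matrix.fromBlocks_mulVec]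
      simp [Matrix.one_mulVec, Matrix.zero_mulVec, Matrix.neg_mulVec]
    rw [hmv, dotProduct, Fintype.sum_sum_type]
    simp only [Sum.elim_inl, Sum.elim_inr, Pi.neg_apply, Function.comp_apply]
    rw [Finset.sum_sub_distrib]
    simp [sub_eq_add_neg]
  rw [key, key]
  rw [← Matrix.mulVec_transpose A t, Matrix.mulVec_mulVec, Matrix.dotProduct_mulVec,
    Matrix.vecMul_vecMul, ← Matrix.mul_assoc, hA, ← Matrix.dotProduct_mulVec]
lemma eM_conj (M : ℕ) (t : ℤ) : (starRingEnd ℂ) (eM M t) = eM M (-t) := by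
  rw [eM, eM, ← Complex.exp_conj]
  congr 1
  simp only [map_div₀, map_mul, Complex.conj_I, map_ofNat, Complex.conj_ofReal, map_intCast,
    map_natCast]
  push_cast
  ring

/-- congruence of `eM` on sums via a pointwise certificate -/
lemma eM_sum_congr (M : ℕ) (f g k : Fin d → ℤ) (h : ∀ i, g i = f i + (M : ℤ) * k i) :
    eM M (∑ i : Fin d, f i) = eM M (∑ i : Fin d, g i) := by
  apply eM_congr
  rw [Int.modEq_iff_dvd]
  refine ⟨∑ i : Fin d, k i, ?_⟩
  rw [Finset.mul_sum, ← Finset.sum_sub_distrib]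
  exact Finset.sum_congr rfl fun i _ => by rw [h i]; ring

lemma Tq_adj (n : (Fin d ⊕ Fin d) → ℤ) (ψ φ : (Fin d → ZMod N) → ℂ) :
    hip d N (Tq d N n ψ) φ = hip d N ψ (Tq d N (-n) φ) := by
  have hN := NeZero.ne N
  rw [TqNF d N n, TqNF d N (-n), hip, hip]
  congr 1
  set c : Fin d → ZMod N := fun i => ((n (Sum.inl i) : ℤ) : ZMod N) with hc
  refine Fintype.sum_equiv (Equiv.addRight c) _ _ fun x => ?_
  show NFc d N _ n ψ x * (starRingEnd ℂ) (φ x)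
      = ψ (x + c) * (starRingEnd ℂ) (NFc d N _ (-n) φ (x + c))
  rw [NFc, NFc]
  have hpsi : ψ (fun i => x i + ((n (Sum.inl i) : ℤ) : ZMod N)) = ψ (x + c) := rfl
  have hphi : φ (fun i => (x + c) i + (((-n) (Sum.inl i) : ℤ) : ZMod N)) = φ x := by
    congr 1
    funext i
    show x i + c i + (((-n) (Sum.inl i) : ℤ) : ZMod N) = x i
    rw [hc]
    simp only [Pi.neg_apply]
    push_cast
    ring
  rw [hpsi, hphi]
  rw [map_mul, map_mul, eM_conj, eM_conj]
  have hS : (∑ i : Fin d, (1 + (N:ℤ)^2) * ((-n) (Sum.inl i) * (-n) (Sum.inr i)))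
      = ∑ i : Fin d, (1 + (N:ℤ)^2) * (n (Sum.inl i) * n (Sum.inr i)) := by
    refine Finset.sum_congr rfl fun i _ => ?_
    simp only [Pi.neg_apply]
    ring
  rw [hS]
  have hval2 : eM N (-∑ i : Fin d, (-n) (Sum.inr i) * (((x + c) i).val : ℤ))
      = eM N (∑ i : Fin d, n (Sum.inr i) * ((x i).val : ℤ)) *
        eM N (∑ i : Fin d, n (Sum.inr i) * n (Sum.inl i)) := by
    rw [← eM_add, ← Finset.sum_neg_distrib, ← Finset.sum_add_distrib]
    apply eM_congr
    rw [← ZMod.intCast_eq_intCast_iff]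
    push_cast
    refine Finset.sum_congr rfl fun i _ => ?_
    have h1 := zval N ((x + c) i)
    have h2 := zval N (x i)
    push_cast at h1 h2
    rw [h1, h2]
    simp only [Pi.neg_apply]
    have hxc : (x + c) i = x i + ((n (Sum.inl i) : ℤ) : ZMod N) := rfl
    rw [hxc]
    push_cast
    ring
  rw [hval2]
  have hphase : eM (2 * N) (∑ i : Fin d, (1 + (N:ℤ)^2) * (n (Sum.inl i) * n (Sum.inr i)))
      = eM (2 * N) (-∑ i : Fin d, (1 + (N:ℤ)^2) * (n (Sum.inl i) * n (Sum.inr i))) *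
        eM N (∑ i : Fin d, n (Sum.inr i) * n (Sum.inl i)) := by
    rw [eM_double N hN, ← eM_add, ← Finset.sum_neg_distrib, Finset.mul_sum,
      ← Finset.sum_add_distrib]
    refine eM_sum_congr d (2 * N) _ _ (fun i => -((N:ℤ) * (n (Sum.inl i) * n (Sum.inr i)))) ?_
    intro i
    push_cast
    ring
  rw [hphase]
  ring

/-- `hip` is additive in the first/second argument over finite sums -/
lemma hip_sum_left {α : Type*} (s : Finset α) (f : α → ((Fin d → ZMod N) → ℂ))
    (φ : (Fin d → ZMod N) → ℂ) :
    hip d N (∑ j ∈ s, f j) φ = ∑ j ∈ s, hip d N (f j) φ := by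
  simp only [hip, Finset.sum_apply, Finset.sum_mul]
  rw [Finset.sum_comm, Finset.mul_sum]

lemma hip_right_ext (ξ₁ ξ₂ : (Fin d → ZMod N) → ℂ)
    (h : ∀ ψ, hip d N ψ ξ₁ = hip d N ψ ξ₂) : ξ₁ = ξ₂ := by
  have hN := NeZero.ne N
  funext x₀
  have h₀ := h (fun x => if x = x₀ then 1 else 0)
  rw [hip, hip] at h₀
  simp only [ite_mul, one_mul, zero_mul] at h₀
  rw [Finset.sum_ite_eq' Finset.univ x₀ (fun x => (starRingEnd ℂ) (ξ₁ x)),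
    Finset.sum_ite_eq' Finset.univ x₀ (fun x => (starRingEnd ℂ) (ξ₂ x))] at h₀
  simp only [Finset.mem_univ, if_true] at h₀
  have hNd : (((N : ℂ)) ^ d)⁻¹ ≠ 0 := by
    apply inv_ne_zero
    apply pow_ne_zero
    exact_mod_cast hN
  have := mul_left_cancel₀ hNd h₀
  exact star_injective this

/-- character sum over all of `(ZMod N)^{2d}` -/
lemma char_sum (u : (Fin d ⊕ Fin d) → ℤ) :
    ∑ m : (Fin d ⊕ Fin d) → ZMod N,
      eM N (∑ i : Fin d, (((m (Sum.inl i)).val : ℤ) * u (Sum.inr i)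
        - ((m (Sum.inr i)).val : ℤ) * u (Sum.inl i)))
    = if ∀ j, (N : ℤ) ∣ u j then ((N : ℂ) ^ (2 * d)) else 0 := by
  classical
  have hN := NeZero.ne N
  set W : (Fin d ⊕ Fin d) → ℤ := Sum.elim (fun i => u (Sum.inr i)) (fun i => -(u (Sum.inl i)))
    with hW
  have hexp : ∀ m : (Fin d ⊕ Fin d) → ZMod N,
      (∑ i : Fin d, (((m (Sum.inl i)).val : ℤ) * u (Sum.inr i)
        - ((m (Sum.inr i)).val : ℤ) * u (Sum.inl i)))
      = ∑ j : Fin d ⊕ Fin d, ((m j).val : ℤ) * W j := by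
    intro m
    rw [Fintype.sum_sum_type]
    rw [Finset.sum_sub_distrib]
    simp only [hW, Sum.elim_inl, Sum.elim_inr]
    rw [sub_eq_add_neg, ← Finset.sum_neg_distrib]
    congr 1
    exact Finset.sum_congr rfl fun i _ => by ring
  have step1 : ∑ m : (Fin d ⊕ Fin d) → ZMod N,
      eM N (∑ i : Fin d, (((m (Sum.inl i)).val : ℤ) * u (Sum.inr i)
        - ((m (Sum.inr i)).val : ℤ) * u (Sum.inl i)))
      = ∑ m : (Fin d ⊕ Fin d) → ZMod N, ∏ j : Fin d ⊕ Fin d, eM N (((m j).val : ℤ) * W j) := by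
    refine Finset.sum_congr rfl fun m _ => ?_
    rw [hexp m, eM_sum]
  rw [step1]
  have step2 : ∑ m : (Fin d ⊕ Fin d) → ZMod N, ∏ j : Fin d ⊕ Fin d, eM N (((m j).val : ℤ) * W j)
      = ∏ j : Fin d ⊕ Fin d, ∑ z : ZMod N, eM N ((z.val : ℤ) * W j) := by
    rw [Finset.prod_univ_sum]
    rw [Fintype.piFinset_univ]
  rw [step2]
  have step3 : ∀ j, (∑ z : ZMod N, eM N ((z.val : ℤ) * W j))
      = if (N : ℤ) ∣ W j then (N : ℂ) else 0 := fun j => eM_geom_sum N (W j)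
  rw [Finset.prod_congr rfl fun j _ => step3 j]
  by_cases hall : ∀ j, (N : ℤ) ∣ u j
  · have hWdvd : ∀ j, (N : ℤ) ∣ W j := by
      intro j
      rcases j with i | i
      · simpa [hW] using hall (Sum.inr i)
      · simpa [hW] using (hall (Sum.inl i)).neg_right
    rw [if_pos hall]
    rw [Finset.prod_congr rfl fun j _ => if_pos (hWdvd j)]
    rw [Finset.prod_const]
    rw [Finset.card_univ]
    rw [Fintype.card_sum, Fintype.card_fin]
    rw [two_mul]
  · rw [if_neg hall]
    push_neg at hall
    obtain ⟨j₀, hj₀⟩ := hall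
    have : ∃ j₁, ¬ (N : ℤ) ∣ W j₁ := by
      rcases j₀ with i | i
      · exact ⟨Sum.inr i, by simpa [hW] using fun h => hj₀ ((dvd_neg).mp h)⟩
      · exact ⟨Sum.inl i, by simpa [hW] using hj₀⟩
    obtain ⟨j₁, hj₁⟩ := this
    refine Finset.prod_eq_zero (Finset.mem_univ j₁) ?_
    rw [if_neg hj₁]

variable {A : Matrix (Fin d ⊕ Fin d) (Fin d ⊕ Fin d) ℤ}

/-- the fourfold product in `PT` normal form -/
noncomputable def PT (A : Matrix (Fin d ⊕ Fin d) (Fin d ⊕ Fin d) ℤ)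
    (n q : (Fin d ⊕ Fin d) → ℤ) (ψ : (Fin d → ZMod N) → ℂ) : (Fin d → ZMod N) → ℂ :=
  NFc d N
    (eM (2 * N) (∑ i : Fin d, Xe d N n (-(Matrix.vecMul n A)) (Matrix.vecMul q A) (-q) i))
    (n + (-(Matrix.vecMul n A)) + Matrix.vecMul q A + (-q)) ψ

lemma PT_four (n q : (Fin d ⊕ Fin d) → ℤ) (ψ : (Fin d → ZMod N) → ℂ) :
    Tq d N n (Tq d N (-(Matrix.vecMul n A)) (Tq d N (Matrix.vecMul q A) (Tq d N (-q) ψ))) =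
      PT d N A n q ψ :=
  four_comp d N n (-(Matrix.vecMul n A)) (Matrix.vecMul q A) (-q) ψ

/-- invariance of `PT` under changing the first argument mod `N` -/
lemma PT_congr (hA4 : A.map (Int.cast : ℤ → ZMod 4) = -1)
    (n p q : (Fin d ⊕ Fin d) → ℤ)
    (hnp : ∀ j, ((n j : ℤ) : ZMod N) = ((p j : ℤ) : ZMod N))
    (ψ : (Fin d → ZMod N) → ℂ) :
    PT d N A n q ψ = PT d N A p q ψ := by
  have hN := NeZero.ne N
  have hdiv : ∀ j, (N : ℤ) ∣ (n j - p j) := by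
    intro j
    rw [← ZMod.intCast_zmod_eq_zero_iff_dvd]
    push_cast
    rw [hnp j]
    ring
  set ν : (Fin d ⊕ Fin d) → ℤ := fun j => (n j - p j) / N with hν
  have hn : n = p + (N : ℤ) • ν := by
    funext j
    obtain ⟨k, hk⟩ := hdiv j
    have hNz : (N:ℤ) ≠ 0 := by exact_mod_cast hN
    show n j = p j + (N:ℤ) * ((n j - p j) / N)
    rw [hk, Int.mul_ediv_cancel_left _ hNz]
    linarith
  set u : (Fin d ⊕ Fin d) → ℤ := fun j => (Matrix.vecMul p A j + p j) / 4 with hu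
  set w : (Fin d ⊕ Fin d) → ℤ := fun j => (Matrix.vecMul ν A j + ν j) / 4 with hw
  set s : (Fin d ⊕ Fin d) → ℤ := fun j => (Matrix.vecMul q A j + q j) / 4 with hs
  have hup : Matrix.vecMul p A = fun j => -(p j) + 4 * u j := A4_sub d hA4 p
  have hwp : Matrix.vecMul ν A = fun j => -(ν j) + 4 * w j := A4_sub d hA4 ν
  have hsp : Matrix.vecMul q A = fun j => -(q j) + 4 * s j := A4_sub d hA4 q
  have hnA : Matrix.vecMul n A = fun j => ((-(p j) + 4 * u j) + (N:ℤ) * (-(ν j) + 4 * w j)) := by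
    rw [hn, Matrix.add_vecMul, Matrix.smul_vecMul, hup, hwp]
    funext j
    simp [Pi.add_apply, Pi.smul_apply, smul_eq_mul]
  rw [PT, PT]
  -- phase equality
  have hphase :
      eM (2 * N) (∑ i : Fin d, Xe d N n (-(Matrix.vecMul n A)) (Matrix.vecMul q A) (-q) i)
      = eM (2 * N) (∑ i : Fin d, Xe d N p (-(Matrix.vecMul p A)) (Matrix.vecMul q A) (-q) i) := by
    rw [hnA, hup, hsp]
    rw [show n = p + (N : ℤ) • ν from hn]
    refine (eM_sum_congr d (2 * N) _ _
      (fun i => (1 * ((N:ℤ)) * ((N:ℤ)) * ((N:ℤ)) * (ν (inl i)) * (ν (inr i)) + -2 * ((N:ℤ)) * ((N:ℤ)) * ((N:ℤ)) * (ν (inl i)) * (w (inr i)) + -2 * ((N:ℤ)) * ((N:ℤ)) * ((N:ℤ)) * (ν (inr i)) * (w (inl i)) + 8 * ((N:ℤ)) * ((N:ℤ)) * ((N:ℤ)) * (w (inl i)) * (w (inr i)) + 1 * ((N:ℤ)) * ((N:ℤ)) * (p (inl i)) * (ν (inr i)) + -2 * ((N:ℤ)) * ((N:ℤ)) * (p (inl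 i)) * (w (inr i)) + 1 * ((N:ℤ)) * ((N:ℤ)) * (p (inr i)) * (ν (inl i)) + -2 * ((N:ℤ)) * ((N:ℤ)) * (p (inr i)) * (w (inl i)) + -2 * ((N:ℤ)) * ((N:ℤ)) * (u (inl i)) * (ν (inr i)) + 8 * ((N:ℤ)) * ((N:ℤ)) * (u (inl i)) * (w (inr i)) + -2 * ((N:ℤ)) * ((N:ℤ)) * (u (inr i)) * (ν (inl i)) + 8 * ((N:ℤ)) * ((N:ℤ)) * (u (inr i)) * (w (inl i)) + 2 * ((N:ℤ)) * (ν (inl i)) * (ν (inr i)) + -6 * ((N:ℤ)) * (ν (inl i)) * (w (inr i)) + -2 * ((N:ℤ)) * (ν (inr i)) * (w (inl i)) + 8 * ((N:ℤ)) * (w (inl i)) * (w (inr i)) + 2 * (p (inl i)) * (ν (inr i)) + -6 * (p (inl i)) * (w (inr i)) + 2 * (p (inr i)) * (ν (inl i)) + -2 * (p (inr i)) * (w (inl i)) + -4 * (q (inr i)) * (ν (inl i)) + 8 * (q (inr i)) * (w (inl i)) + 8 * (s (inr i)) * (ν (inl i)) + -16 * (s (inr i)) * (w (inl i)) + -2 *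 (u (inl i)) * (ν (inr i)) + 8 * (u (inl i)) * (w (inr i)) + -6 * (u (inr i)) * (ν (inl i)) + 8 * (u (inr i)) * (w (inl i)))) ?_).symm
    intro i
    have h := Xe_inv d N p ν u w q s i
    push_cast
    push_cast at h
    linarith
  rw [hphase]
  -- vector congruence
  apply NFc_w_congr
  intro j
  have hveq : (n + (-(Matrix.vecMul n A)) + Matrix.vecMul q A + (-q)) j
      = (p + (-(Matrix.vecMul p A)) + Matrix.vecMul q A + (-q)) j
        + (N : ℤ) * (ν j - Matrix.vecMul ν A j) := by
    rw [hn, Matrix.add_vecMul, Matrix.smul_vecMul]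
    simp only [Pi.add_apply, Pi.neg_apply, Pi.smul_apply, smul_eq_mul]
    ring
  rw [hveq]
  push_cast
  simp [ZMod.natCast_self]

open Sum in
/-- splitting of the diagonal term -/
lemma PT_split (hA : A * Jz d * A.transpose = Jz d)
    (hA4 : A.map (Int.cast : ℤ → ZMod 4) = -1)
    (m t : (Fin d ⊕ Fin d) → ℤ) (ψ : (Fin d → ZMod N) → ℂ) (y : Fin d → ZMod N) :
    PT d N A (m + t) m ψ y
    = eM (2 * N) (∑ i : Fin d, CtE d N t (fun j => (Matrix.vecMul t A j + t j) / 4) i)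
      * eM N (∑ i : Fin d, (m (inl i) * (t (inr i) - Matrix.vecMul t A (inr i))
          - m (inr i) * (t (inl i) - Matrix.vecMul t A (inl i))))
      * NFc d N 1 (t - Matrix.vecMul t A) ψ y := by
  have hN := NeZero.ne N
  set sm : (Fin d ⊕ Fin d) → ℤ := fun j => (Matrix.vecMul m A j + m j) / 4 with hsmdef
  set v0 : (Fin d ⊕ Fin d) → ℤ := fun j => (Matrix.vecMul t A j + t j) / 4 with hv0def
  have hsm : Matrix.vecMul m A = fun j => -(m j) + 4 * sm j := A4_sub d hA4 m
  have hst : Matrix.vecMul t A = fun j => -(t j) + 4 * v0 j := A4_sub d hA4 t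
  rw [PT]
  have hw : (m + t) + (-(Matrix.vecMul (m + t) A)) + Matrix.vecMul m A + (-m)
      = t - Matrix.vecMul t A := by
    rw [Matrix.add_vecMul]
    funext j
    simp only [Pi.add_apply, Pi.neg_apply, Pi.sub_apply]
    ring
  rw [hw]
  have hXpt : ∀ i : Fin d,
      Xe d N (m + t) (-(Matrix.vecMul (m + t) A)) (Matrix.vecMul m A) (-m) i
      = CtE d N t v0 i
        + 2 * (m (inl i) * (t (inr i) - Matrix.vecMul t A (inr i))
             - m (inr i) * (t (inl i) - Matrix.vecMul t A (inl i)))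
        + 2 * (N:ℤ) * (2 * ((N:ℤ)) * (m (inl i)) * (m (inr i)) + -4 * ((N:ℤ)) * (m (inl i)) * (sm (inr i)) + 1 * ((N:ℤ)) * (m (inl i)) * (t (inr i)) + -2 * ((N:ℤ)) * (m (inl i)) * (v0 (inr i)) + -4 * ((N:ℤ)) * (m (inr i)) * (sm (inl i)) + 1 * ((N:ℤ)) * (m (inr i)) * (t (inl i)) + -2 * ((N:ℤ)) * (m (inr i)) * (v0 (inl i)) + 16 * ((N:ℤ)) * (sm (inl i)) * (sm (inr i)) + -2 * ((N:ℤ)) * (sm (inl i)) * (t (inr i)) + 8 * ((N:ℤ)) * (sm (inl i)) * (v0 (inr i)) + -2 * ((N:ℤ)) * (sm (inr i)) * (t (inl i)) + 8 * ((N:ℤ)) * (sm (inr i)) * (v0 (inl i)))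
        + ((Matrix.vecMul m A (inl i) * Matrix.vecMul t A (inr i)
            - Matrix.vecMul m A (inr i) * Matrix.vecMul t A (inl i))
           - (m (inl i) * t (inr i) - m (inr i) * t (inl i))) := by
    intro i
    rw [Matrix.add_vecMul, hsm, hst]
    simp only [Xe, CtE, Pi.add_apply, Pi.neg_apply]
    ring
  have hsymp := symp_inv d hA m t
  have hphase :
      eM (2 * N) (∑ i : Fin d,
        Xe d N (m + t) (-(Matrix.vecMul (m + t) A)) (Matrix.vecMul m A) (-m) i)
      = eM (2 * N) ((∑ i : Fin d, CtE d N t v0 i)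
          + 2 * ∑ i : Fin d, (m (inl i) * (t (inr i) - Matrix.vecMul t A (inr i))
              - m (inr i) * (t (inl i) - Matrix.vecMul t A (inl i)))) := by
    apply eM_congr
    rw [Int.modEq_iff_dvd]
    refine ⟨-∑ i : Fin d, (2 * ((N:ℤ)) * (m (inl i)) * (m (inr i)) + -4 * ((N:ℤ)) * (m (inl i)) * (sm (inr i)) + 1 * ((N:ℤ)) * (m (inl i)) * (t (inr i)) + -2 * ((N:ℤ)) * (m (inl i)) * (v0 (inr i)) + -4 * ((N:ℤ)) * (m (inr i)) * (sm (inl i)) + 1 * ((N:ℤ)) * (m (inr i)) * (t (inl i)) + -2 * ((N:ℤ)) * (m (inr i)) * (v0 (inl i)) + 16 * ((N:ℤ)) * (sm (inl i)) * (sm (inr i)) + -2 * ((N:ℤ)) * (sm (inl i)) * (t (inr i)) + 8 * ((N:ℤ)) * (sm (inl i)) * (v0 (inr i)) + -2 * ((N:ℤ)) * (sm (inr i)) * (t (inl i)) + 8 * ((N:ℤ)) * (sm (inr i)) * (v0 (inl i))), ?_⟩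
    have h1 : (∑ i : Fin d,
        Xe d N (m + t) (-(Matrix.vecMul (m + t) A)) (Matrix.vecMul m A) (-m) i)
        = (∑ i : Fin d, CtE d N t v0 i)
          + 2 * (∑ i : Fin d, (m (inl i) * (t (inr i) - Matrix.vecMul t A (inr i))
              - m (inr i) * (t (inl i) - Matrix.vecMul t A (inl i))))
          + 2 * (N:ℤ) * (∑ i : Fin d, (2 * ((N:ℤ)) * (m (inl i)) * (m (inr i)) + -4 * ((N:ℤ)) * (m (inl i)) * (sm (inr i)) + 1 * ((N:ℤ)) * (m (inl i)) * (t (inr i)) + -2 * ((N:ℤ)) * (m (inl i)) * (v0 (inr i)) + -4 * ((N:ℤ)) * (m (inr i)) * (sm (inl i)) + 1 * ((N:ℤ)) * (m (inr i)) * (t (inl i)) + -2 * ((N:ℤ)) * (m (inr i)) * (v0 (inl i)) + 16 * ((N:ℤ)) * (sm (inl i)) * (sm (inr i)) + -2 * ((N:ℤ)) * (sm (inl i)) * (t (inr i)) + 8 * ((N:ℤ)) * (sm (inl i)) * (v0 (inr i)) + -2 * ((N:ℤ)) * (sm (inr i)) * (t (inl i)) + 8 * ((N:ℤ)) * (sm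 (inr i)) * (v0 (inl i))))
          + ((∑ i : Fin d, (Matrix.vecMul m A (inl i) * Matrix.vecMul t A (inr i)
              - Matrix.vecMul m A (inr i) * Matrix.vecMul t A (inl i)))
             - ∑ i : Fin d, (m (inl i) * t (inr i) - m (inr i) * t (inl i))) := by
      rw [Finset.sum_congr rfl fun i _ => hXpt i]
      rw [Finset.sum_add_distrib, Finset.sum_add_distrib, Finset.sum_add_distrib,
        Finset.sum_sub_distrib]
      rw [Finset.mul_sum, Finset.mul_sum]
    rw [h1, hsymp]
    push_cast
    ring
  rw [hphase, eM_add, ← eM_double N hN]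
  rw [NFc, NFc]
  ring
lemma CtE_sum_one (t v g : (Fin d ⊕ Fin d) → ℤ)
    (hg : ∀ j, 2 * t j - 4 * v j = (N : ℤ) * g j) :
    eM (2 * N) (∑ i : Fin d, CtE d N t v i) = 1 := by
  apply eM_dvd_eq_one
  have h2N : ((2 * N : ℕ) : ℤ) = 2 * (N : ℤ) := by push_cast; ring
  rw [h2N]
  obtain ⟨M, hM⟩ : ∃ M, N = 2 * M ∨ N = 2 * M + 1 := ⟨N / 2, by omega⟩
  rcases hM with hM | hM
  · exact Finset.dvd_sum fun i _ => CtE_dvd_even d N M hM t v g hg i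
  · exact Finset.dvd_sum fun i _ => CtE_dvd_odd d N M hM t v g hg i

lemma hip_sum_right {α : Type*} (s : Finset α) (ψ : (Fin d → ZMod N) → ℂ)
    (f : α → ((Fin d → ZMod N) → ℂ)) :
    hip d N ψ (∑ j ∈ s, f j) = ∑ j ∈ s, hip d N ψ (f j) := by
  simp only [hip, Finset.sum_apply, map_sum, Finset.mul_sum]
  rw [Finset.sum_comm]

/-- `ZMod`-cast of an integer `vecMul` -/
lemma cast_vecMul (A : Matrix (Fin d ⊕ Fin d) (Fin d ⊕ Fin d) ℤ)
    (v : (Fin d ⊕ Fin d) → ℤ) (j : Fin d ⊕ Fin d) :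
    ((Matrix.vecMul v A j : ℤ) : ZMod N)
      = Matrix.vecMul (fun k => ((v k : ℤ) : ZMod N)) (A.map (Int.cast : ℤ → ZMod N)) j := by
  rw [Matrix.vecMul, Matrix.vecMul, dotProduct, dotProduct]
  push_cast
  refine Finset.sum_congr rfl fun k _ => ?_
  rw [Matrix.map_apply]
end Ops
theorem statement2 (d N : ℕ) [NeZero N] (hd : 1 ≤ d) (hN : 1 ≤ N)
    (A : Matrix (Fin d ⊕ Fin d) (Fin d ⊕ Fin d) ℤ)
    -- `A ∈ Sp(2d,ℤ)`
    (hA : A * Jz d * A.transpose = Jz d)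
    -- `A ≡ −I (mod 4)`
    (hA4 : A.map (Int.cast : ℤ → ZMod 4) = -1)
    -- `F = ∑_{n ∈ {0,…,N−1}^{2d}} T_N(n) ∘ T_N(−nA)`
    (F : ((Fin d → ZMod N) → ℂ) →ₗ[ℂ] ((Fin d → ZMod N) → ℂ))
    (hF : F = ∑ x : (Fin d ⊕ Fin d) → ZMod N,
      Tq d N (fun i => ((x i).val : ℤ)) ∘ₗ
        Tq d N (-(Matrix.vecMul (fun i => ((x i).val : ℤ)) A))) :
    (∀ G : ((Fin d → ZMod N) → ℂ) →ₗ[ℂ] ((Fin d → ZMod N) → ℂ),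
        -- `G = F*`, the adjoint of `F` with respect to the inner product
        (∀ ψ φ, hip d N (F ψ) φ = hip d N ψ (G φ)) →
        F ∘ₗ G = (((N : ℂ) ^ (2 * d)) *
          (Nat.card {v : (Fin d ⊕ Fin d) → ZMod N //
            Matrix.vecMul v (A.map (Int.cast : ℤ → ZMod N) - 1) = 0} : ℂ)) •
          LinearMap.id) ∧
      F ≠ 0 := by
  classical
  have hNne : N ≠ 0 := NeZero.ne N
  set G0 : ((Fin d → ZMod N) → ℂ) →ₗ[ℂ] ((Fin d → ZMod N) → ℂ) :=
    ∑ x : (Fin d ⊕ Fin d) → ZMod N,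
      Tq d N (Matrix.vecMul (fun j => ((x j).val : ℤ)) A) ∘ₗ
        Tq d N (-(fun j => ((x j).val : ℤ))) with hG0
  set Q : ((Fin d ⊕ Fin d) → ZMod N) → Prop :=
    fun v => Matrix.vecMul v (A.map (Int.cast : ℤ → ZMod N) - 1) = 0 with hQ
  -- bridge between the integer divisibility condition and `Q`
  have key0 : ∀ (r : (Fin d ⊕ Fin d) → ZMod N) (j : Fin d ⊕ Fin d),
      ((((fun k => ((r k).val : ℤ)) - Matrix.vecMul (fun k => ((r k).val : ℤ)) A) j : ℤ) : ZMod N)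
        = -(Matrix.vecMul r (A.map (Int.cast : ℤ → ZMod N) - 1) j) := by
    intro r j
    rw [Pi.sub_apply]
    push_cast
    rw [cast_vecMul d N A]
    rw [Matrix.vecMul_sub, Matrix.vecMul_one]
    simp only [Pi.sub_apply]
    have hval : (fun k => ((((fun k' => ((r k').val : ℤ)) k : ℤ)) : ZMod N)) = r := by
      funext k
      exact zval N (r k)
    rw [hval]
    have hz : (((r j).val : ℕ) : ZMod N) = r j := by
      have := zval N (r j)
      push_cast at this
      exact this
    rw [hz]
    ring
  have hbridge : ∀ r : (Fin d ⊕ Fin d) → ZMod N,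
      (∀ j, (N : ℤ) ∣ ((fun k => ((r k).val : ℤ))
        - Matrix.vecMul (fun k => ((r k).val : ℤ)) A) j) ↔ Q r := by
    intro r
    rw [hQ]
    constructor
    · intro h
      funext j
      have hj := (ZMod.intCast_zmod_eq_zero_iff_dvd _ N).mpr (h j)
      rw [key0 r j] at hj
      have := neg_eq_zero.mp hj
      simpa using this
    · intro h j
      rw [← ZMod.intCast_zmod_eq_zero_iff_dvd]
      rw [key0 r j, h]
      simp
  -- the key computation
  have key : ∀ (ψ : (Fin d → ZMod N) → ℂ) (y : Fin d → ZMod N), (F ∘ₗ G0) ψ y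
      = (((N : ℂ) ^ (2 * d)) * ((Finset.univ.filter Q).card : ℂ)) * ψ y := by
    intro ψ y
    rw [LinearMap.comp_apply, hF, LinearMap.sum_apply, Finset.sum_apply]
    have hGexp : G0 ψ = ∑ m : (Fin d ⊕ Fin d) → ZMod N,
        Tq d N (Matrix.vecMul (fun j => ((m j).val : ℤ)) A)
          (Tq d N (-(fun j => ((m j).val : ℤ))) ψ) := by
      rw [hG0, LinearMap.sum_apply]
      simp only [LinearMap.comp_apply]
    have e2 : ∀ n : (Fin d ⊕ Fin d) → ZMod N,
        ((Tq d N (fun i => ((n i).val : ℤ)) ∘ₗ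
          Tq d N (-(Matrix.vecMul (fun i => ((n i).val : ℤ)) A))) (G0 ψ)) y
        = ∑ m : (Fin d ⊕ Fin d) → ZMod N,
            PT d N A (fun j => ((n j).val : ℤ)) (fun j => ((m j).val : ℤ)) ψ y := by
      intro n
      rw [LinearMap.comp_apply, hGexp, map_sum, map_sum, Finset.sum_apply]
      refine Finset.sum_congr rfl fun m _ => ?_
      rw [PT_four d N]
    rw [Finset.sum_congr rfl fun n _ => e2 n]
    rw [Finset.sum_comm]
    have e3 : ∀ m : (Fin d ⊕ Fin d) → ZMod N,
        (∑ n : (Fin d ⊕ Fin d) → ZMod N,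
          PT d N A (fun j => ((n j).val : ℤ)) (fun j => ((m j).val : ℤ)) ψ y)
        = ∑ r : (Fin d ⊕ Fin d) → ZMod N,
            PT d N A ((fun j => ((m j).val : ℤ)) + (fun j => ((r j).val : ℤ)))
              (fun j => ((m j).val : ℤ)) ψ y := by
      intro m
      rw [← Fintype.sum_equiv (Equiv.addLeft m)
        (fun r => PT d N A (fun j => (((m + r) j).val : ℤ)) (fun j => ((m j).val : ℤ)) ψ y)
        (fun n => PT d N A (fun j => ((n j).val : ℤ)) (fun j => ((m j).val : ℤ)) ψ y)
        (fun r => rfl)]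
      refine Finset.sum_congr rfl fun r _ => ?_
      refine congrFun (PT_congr d N hA4 _ _ _ (fun j => ?_) ψ) y
      show ((((m + r) j).val : ℤ) : ZMod N) = _
      rw [zval N ((m + r) j)]
      show m j + r j = ((((fun j' => ((m j').val : ℤ)) + fun j' => ((r j').val : ℤ)) j : ℤ) : ZMod N)
      rw [Pi.add_apply]
      push_cast
      simp [ZMod.natCast_val, ZMod.cast_id]
    rw [Finset.sum_congr rfl fun m _ => e3 m]
    rw [Finset.sum_comm]
    have e4 : ∀ r : (Fin d ⊕ Fin d) → ZMod N,
        (∑ m : (Fin d ⊕ Fin d) → ZMod N,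
          PT d N A ((fun j => ((m j).val : ℤ)) + (fun j => ((r j).val : ℤ)))
            (fun j => ((m j).val : ℤ)) ψ y)
        = if (∀ j, (N : ℤ) ∣ ((fun k => ((r k).val : ℤ))
            - Matrix.vecMul (fun k => ((r k).val : ℤ)) A) j)
          then ((N : ℂ) ^ (2 * d)) * ψ y else 0 := by
      intro r
      set t : (Fin d ⊕ Fin d) → ℤ := fun j => ((r j).val : ℤ) with ht
      rw [Finset.sum_congr rfl fun m _ =>
        PT_split d N hA hA4 (fun j => ((m j).val : ℤ)) t ψ y]
      set C1 : ℂ := eM (2 * N)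
        (∑ i : Fin d, CtE d N t (fun j => (Matrix.vecMul t A j + t j) / 4) i) with hC1def
      set Zy : ℂ := NFc d N 1 (t - Matrix.vecMul t A) ψ y with hZy
      have hpull : (∑ m : (Fin d ⊕ Fin d) → ZMod N,
          C1 * eM N (∑ i : Fin d,
            (((m (Sum.inl i)).val : ℤ) * (t (Sum.inr i) - Matrix.vecMul t A (Sum.inr i))
            - ((m (Sum.inr i)).val : ℤ) * (t (Sum.inl i) - Matrix.vecMul t A (Sum.inl i)))) * Zy)
          = (C1 * Zy) * ∑ m : (Fin d ⊕ Fin d) → ZMod N,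
              eM N (∑ i : Fin d,
                (((m (Sum.inl i)).val : ℤ) * ((t - Matrix.vecMul t A) (Sum.inr i))
                - ((m (Sum.inr i)).val : ℤ) * ((t - Matrix.vecMul t A) (Sum.inl i)))) := by
        rw [Finset.mul_sum]
        refine Finset.sum_congr rfl fun m _ => ?_
        have hss : (∑ i : Fin d,
            (((m (Sum.inl i)).val : ℤ) * (t (Sum.inr i) - Matrix.vecMul t A (Sum.inr i))
            - ((m (Sum.inr i)).val : ℤ) * (t (Sum.inl i) - Matrix.vecMul t A (Sum.inl i))))
            = ∑ i : Fin d,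
              (((m (Sum.inl i)).val : ℤ) * ((t - Matrix.vecMul t A) (Sum.inr i))
              - ((m (Sum.inr i)).val : ℤ) * ((t - Matrix.vecMul t A) (Sum.inl i))) := by
          refine Finset.sum_congr rfl fun i _ => ?_
          simp only [Pi.sub_apply]
        rw [hss]
        ring
      rw [hpull]
      rw [char_sum d N (t - Matrix.vecMul t A)]
      by_cases hdvd : ∀ j, (N : ℤ) ∣ (t - Matrix.vecMul t A) j
      · rw [if_pos hdvd, if_pos hdvd]
        have hst : Matrix.vecMul t A
            = fun j => -(t j) + 4 * ((Matrix.vecMul t A j + t j) / 4) := A4_sub d hA4 t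
        have hg : ∀ j, 2 * t j - 4 * ((Matrix.vecMul t A j + t j) / 4)
            = (N : ℤ) * ((t j - Matrix.vecMul t A j) / N) := by
          intro j
          obtain ⟨k, hk⟩ := hdvd j
          rw [Pi.sub_apply] at hk
          have h4 : Matrix.vecMul t A j = -(t j) + 4 * ((Matrix.vecMul t A j + t j) / 4) :=
            congrFun hst j
          have hNz : (N : ℤ) ≠ 0 := by exact_mod_cast hNne
          have : t j - Matrix.vecMul t A j = (N : ℤ) * k := hk
          rw [this, Int.mul_ediv_cancel_left _ hNz]
          omega
        have hC1 : C1 = 1 := by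
          rw [hC1def]
          exact CtE_sum_one d N t _ _ hg
        have hNF : Zy = ψ y := by
          rw [hZy, NFc_trivial d N 1 _ hdvd ψ y, one_mul]
        rw [hC1, hNF]
        ring
      · rw [if_neg hdvd, if_neg hdvd]
        ring
    rw [Finset.sum_congr rfl fun r _ => e4 r]
    have hite : ∀ r : (Fin d ⊕ Fin d) → ZMod N,
        (if (∀ j, (N : ℤ) ∣ ((fun k => ((r k).val : ℤ))
            - Matrix.vecMul (fun k => ((r k).val : ℤ)) A) j)
          then ((N : ℂ) ^ (2 * d)) * ψ y else 0)
        = if Q r then ((N : ℂ) ^ (2 * d)) * ψ y else 0 := by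
      intro r
      exact if_congr (hbridge r) rfl rfl
    rw [Finset.sum_congr rfl fun r _ => hite r]
    rw [Finset.sum_ite, Finset.sum_const, Finset.sum_const_zero, add_zero, nsmul_eq_mul]
    ring
  -- F ∘ₗ G0 is the claimed scalar
  have hcard : ((Finset.univ.filter Q).card : ℂ)
      = (Nat.card {v : (Fin d ⊕ Fin d) → ZMod N // Q v} : ℂ) := by
    rw [Nat.card_eq_fintype_card, Fintype.card_subtype]
  have hFG0 : F ∘ₗ G0 = (((N : ℂ) ^ (2 * d)) *
      (Nat.card {v : (Fin d ⊕ Fin d) → ZMod N // Q v} : ℂ)) • LinearMap.id := by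
    apply LinearMap.ext
    intro ψ
    funext y
    have h := key ψ y
    rw [hcard] at h
    rw [h]
    simp only [LinearMap.smul_apply, LinearMap.id_apply, Pi.smul_apply, smul_eq_mul]
  -- adjointness of G0
  have hG0adj : ∀ ψ φ, hip d N (F ψ) φ = hip d N ψ (G0 φ) := by
    intro ψ φ
    rw [hF, hG0, LinearMap.sum_apply, LinearMap.sum_apply]
    rw [hip_sum_left, hip_sum_right]
    refine Finset.sum_congr rfl fun x _ => ?_
    rw [LinearMap.comp_apply, LinearMap.comp_apply]
    rw [Tq_adj d N, Tq_adj d N]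
    rw [neg_neg]
  constructor
  · intro G hG
    have hGG0 : G = G0 := by
      apply LinearMap.ext
      intro φ
      apply hip_right_ext d N
      intro ψ'
      rw [← hG ψ' φ, hG0adj ψ' φ]
    rw [hGG0]
    exact hFG0
  · intro h0
    rw [h0] at hFG0
    rw [LinearMap.zero_comp] at hFG0
    have happ := congrFun (congrArg (fun (T : ((Fin d → ZMod N) → ℂ) →ₗ[ℂ] ((Fin d → ZMod N) → ℂ)) =>
      T (fun _ => (1 : ℂ))) hFG0) (fun _ => (0 : ZMod N))
    simp only [LinearMap.zero_apply, LinearMap.smul_apply, LinearMap.id_apply, Pi.zero_apply,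
      Pi.smul_apply, smul_eq_mul, mul_one] at happ
    have hκpos : (0 : ℕ) < Nat.card {v : (Fin d ⊕ Fin d) → ZMod N // Q v} := by
      have : Nonempty {v : (Fin d ⊕ Fin d) → ZMod N // Q v} := ⟨⟨0, by
        rw [hQ]
        exact Matrix.zero_vecMul _⟩⟩
      exact Nat.card_pos
    have hNd : ((N : ℂ) ^ (2 * d)) ≠ 0 := by
      apply pow_ne_zero
      exact_mod_cast hNne
    have hκc : ((Nat.card {v : (Fin d ⊕ Fin d) → ZMod N // Q v} : ℕ) : ℂ) ≠ 0 := by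
      exact_mod_cast hκpos.ne'
    exact (mul_ne_zero hNd hκc) happ.symm
end

section
/- Let P be a nonzero prime ideal of O_F lying above an odd rational prime, and suppose P is ramified in K (i.e. P·O_K = 𝒫² for a prime ideal 𝒫 of O_K). Then for every k ≥ 1, the image of the group homomorphism (O_K/P^k O_K)^* → (O_F/P^k)^* induced by the relative norm N_{K/F} is a subgroup of index exactly 2. -/
open NumberField

section Helpers
variable {R : Type*} [CommRing R] {P : Ideal R}

lemma myIsUnit_mk_pow (hPm : P.IsMaximal) {k : ℕ} {a : R} (ha : a ∉ P) :
    IsUnit (Ideal.Quotient.mk (P ^ k) a) := by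
  obtain ⟨b, c, hc, h1⟩ := hPm.exists_inv ha
  have hx : (1 : R) - b * a ∈ P := by
    have h2 : (1 : R) - b * a = c := by linear_combination -h1
    rw [h2]; exact hc
  set x := (1 : R) - b * a with hxdef
  have hgeom : (∑ i ∈ Finset.range k, x ^ i) * (b * a) = 1 - x ^ k := by
    have h3 := geom_sum_mul x k
    linear_combination -h3 + (∑ i ∈ Finset.range k, x ^ i) * hxdef
  have hxk : x ^ k ∈ P ^ k := Ideal.pow_mem_pow hx k
  refine IsUnit.of_mul_eq_one (Ideal.Quotient.mk (P ^ k) (b * ∑ i ∈ Finset.range k, x ^ i)) ?_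
  rw [← map_mul, ← map_one (Ideal.Quotient.mk (P ^ k)), Ideal.Quotient.mk_eq_mk_iff_sub_mem]
  have h4 : a * (b * ∑ i ∈ Finset.range k, x ^ i) - 1 = -(x ^ k) := by
    linear_combination hgeom
  rw [h4]
  exact neg_mem hxk

lemma mynot_unit {k : ℕ} (hk : 1 ≤ k) {a : R} (ha : a ∈ P) (hP : P ≠ ⊤) :
    ¬ IsUnit (Ideal.Quotient.mk (P ^ k) a) := by
  rintro ⟨u, hu⟩
  obtain ⟨b, hb⟩ := Ideal.Quotient.mk_surjective (↑u⁻¹ : R ⧸ P ^ k)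
  have h5 : Ideal.Quotient.mk (P ^ k) (a * b) = 1 := by
    rw [map_mul, ← hu, hb, Units.mul_inv]
  rw [← map_one (Ideal.Quotient.mk (P ^ k)), Ideal.Quotient.mk_eq_mk_iff_sub_mem] at h5
  have h1 : (1 : R) ∈ P := by
    have h2 : a * b - 1 ∈ P := (Ideal.pow_le_self (by omega)) h5
    have h3 : (1 : R) = a * b - (a * b - 1) := by ring
    rw [h3]
    exact sub_mem (Ideal.mul_mem_right _ _ ha) h2
  exact hP (Ideal.eq_top_of_isUnit_mem _ h1 isUnit_one)

lemma mystep {p : ℕ} {a : R} {j : ℕ} (hj : 1 ≤ j) (hpP : (p : R) ∈ P)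
    (ha : a - 1 ∈ P ^ j) : a ^ p - 1 ∈ P ^ (j + 1) := by
  set t := a - 1 with htdef
  have ha' : a = t + 1 := by ring
  have hexp : a ^ p = ∑ i ∈ Finset.range (p + 1), t ^ i * p.choose i := by
    rw [ha', add_pow]; simp
  have hsum : a ^ p - 1 = ∑ i ∈ Finset.range p, t ^ (i + 1) * p.choose (i + 1) := by
    rw [hexp, Finset.sum_range_succ']
    simp
  rw [hsum]
  refine Ideal.sum_mem _ (fun i _ => ?_)
  rcases Nat.eq_zero_or_pos i with hi | hi
  · subst hi
    rw [pow_one, Nat.choose_one_right, pow_succ]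
    exact Ideal.mul_mem_mul ha hpP
  · have h2 : t ^ (i + 1) ∈ P ^ (j + 1) := by
      have hle : P ^ ((i + 1) * j) ≤ P ^ (j + 1) := Ideal.pow_le_pow_right (by nlinarith)
      exact hle (by rw [mul_comm, pow_mul]; exact Ideal.pow_mem_pow ha (i + 1))
    exact Ideal.mul_mem_right _ _ h2

lemma myiter {p : ℕ} {a : R} (hpP : (p : R) ∈ P) (ha : a - 1 ∈ P) (n : ℕ) :
    a ^ (p ^ n) - 1 ∈ P ^ (n + 1) := by
  induction n with
  | zero => simpa using ha
  | succ n ih =>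
      have := mystep (p := p) (a := a ^ (p ^ n)) (Nat.succ_le_succ (Nat.zero_le n)) hpP ih
      rwa [← pow_mul, ← pow_succ] at this
lemma mysq (hPm : P.IsMaximal) {p k : ℕ} (hp : Odd p) (hpP : (p : R) ∈ P) (hk : 1 ≤ k)
    (y : (R ⧸ P ^ k)ˣ) (a c : R) (hay : Ideal.Quotient.mk (P ^ k) a = ↑y)
    (hac : a - c ^ 2 ∈ P) : ∃ z : (R ⧸ P ^ k)ˣ, z ^ 2 = y := by
  have hcP : c ∉ P := by
    intro hc
    have haP : a ∈ P := by
      have : a = (a - c ^ 2) + c * c := by ring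
      rw [this]; exact add_mem hac (Ideal.mul_mem_right _ _ hc)
    exact mynot_unit hk haP hPm.ne_top (hay ▸ y.isUnit)
  obtain ⟨u, hu⟩ := myIsUnit_mk_pow hPm (k := k) hcP
  obtain ⟨b, hb⟩ := Ideal.Quotient.mk_surjective (↑u⁻¹ : R ⧸ P ^ k)
  have hcb : c * b - 1 ∈ P ^ k := by
    rw [← Ideal.Quotient.mk_eq_mk_iff_sub_mem, map_one, map_mul, ← hu, hb, Units.mul_inv]
  have hcb' : c * b - 1 ∈ P := Ideal.pow_le_self (by omega) hcb
  have habp : a * b ^ 2 - 1 ∈ P := by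
    have h : a * b ^ 2 - 1 = b ^ 2 * (a - c ^ 2) + (c * b - 1) * (c * b + 1) := by ring
    rw [h]
    exact add_mem (Ideal.mul_mem_left _ _ hac) (Ideal.mul_mem_right _ _ hcb')
  set w : (R ⧸ P ^ k)ˣ := y * (u⁻¹) ^ 2 with hwdef
  have hwcoe : (↑w : R ⧸ P ^ k) = Ideal.Quotient.mk (P ^ k) (a * b ^ 2) := by
    rw [map_mul, hay, map_pow, hb]
    rfl
  set q := p ^ (k - 1) with hqdef
  have hwq : w ^ q = 1 := by
    ext
    rw [Units.val_pow_eq_pow_val, hwcoe, ← map_pow, Units.val_one,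
      ← map_one (Ideal.Quotient.mk (P ^ k)), Ideal.Quotient.mk_eq_mk_iff_sub_mem]
    have := myiter hpP habp (k - 1)
    rwa [Nat.sub_add_cancel hk] at this
  have hqodd : Odd q := hp.pow
  obtain ⟨r, hr⟩ := hqodd
  obtain ⟨m, hm⟩ : ∃ m, q + 1 = 2 * m := ⟨r + 1, by omega⟩
  refine ⟨w ^ m * u, ?_⟩
  have h1 : w ^ (2 * m) = w := by
    rw [← hm, pow_succ, hwq, one_mul]
  calc (w ^ m * u) ^ 2 = w ^ (2 * m) * u ^ 2 := by rw [mul_pow, ← pow_mul, mul_comm m 2]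
    _ = w * u ^ 2 := by rw [h1]
    _ = y := by rw [hwdef]; group

lemma mysqrone (hPm : P.IsMaximal) {k : ℕ} (hk : 1 ≤ k) (h2 : (2 : R) ∉ P)
    (x : (R ⧸ P ^ k)ˣ) (hx : x ^ 2 = 1) : x = 1 ∨ x = -1 := by
  obtain ⟨a, ha⟩ := Ideal.Quotient.mk_surjective (↑x : R ⧸ P ^ k)
  have hx2 : Ideal.Quotient.mk (P ^ k) (a ^ 2 - 1) = 0 := by
    rw [map_sub, map_pow, ha, map_one, ← Units.val_pow_eq_pow_val, hx, Units.val_one, sub_self]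
  have ha2 : (a - 1) * (a + 1) ∈ P ^ k := by
    have h := Ideal.Quotient.eq_zero_iff_mem.mp hx2
    have he : (a - 1) * (a + 1) = a ^ 2 - 1 := by ring
    rw [he]; exact h
  have hmem : (a - 1) * (a + 1) ∈ P := Ideal.pow_le_self (by omega) ha2
  rcases hPm.isPrime.mem_or_mem hmem with h | h
  · have hap : a + 1 ∉ P := by
      intro hc
      refine h2 ?_
      have he : (2 : R) = (a + 1) - (a - 1) := by ring
      rw [he]; exact sub_mem hc h
    obtain ⟨u, hu⟩ := myIsUnit_mk_pow hPm (k := k) hap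
    obtain ⟨b, hb⟩ := Ideal.Quotient.mk_surjective (↑u⁻¹ : R ⧸ P ^ k)
    have hab : (a + 1) * b - 1 ∈ P ^ k := by
      rw [← Ideal.Quotient.mk_eq_mk_iff_sub_mem, map_one, map_mul, ← hu, hb, Units.mul_inv]
    have hfin : a - 1 ∈ P ^ k := by
      have key : a - 1 = (a - 1) * (a + 1) * b - (a - 1) * ((a + 1) * b - 1) := by ring
      rw [key]; exact sub_mem (Ideal.mul_mem_right _ _ ha2) (Ideal.mul_mem_left _ _ hab)
    left; ext
    rw [← ha, Units.val_one, ← map_one (Ideal.Quotient.mk (P ^ k)),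
      Ideal.Quotient.mk_eq_mk_iff_sub_mem]
    exact hfin
  · have hap : a - 1 ∉ P := by
      intro hc
      refine h2 ?_
      have he : (2 : R) = (a + 1) - (a - 1) := by ring
      rw [he]; exact sub_mem h hc
    obtain ⟨u, hu⟩ := myIsUnit_mk_pow hPm (k := k) hap
    obtain ⟨b, hb⟩ := Ideal.Quotient.mk_surjective (↑u⁻¹ : R ⧸ P ^ k)
    have hab : (a - 1) * b - 1 ∈ P ^ k := by
      rw [← Ideal.Quotient.mk_eq_mk_iff_sub_mem, map_one, map_mul, ← hu, hb, Units.mul_inv]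
    have hfin : a - (-1) ∈ P ^ k := by
      have key : a - (-1) = (a - 1) * (a + 1) * b - (a + 1) * ((a - 1) * b - 1) := by ring
      rw [key]; exact sub_mem (Ideal.mul_mem_right _ _ ha2) (Ideal.mul_mem_left _ _ hab)
    right; ext
    rw [← ha, Units.val_neg, Units.val_one]
    have : Ideal.Quotient.mk (P ^ k) (-1) = -1 := by simp
    rw [← this, Ideal.Quotient.mk_eq_mk_iff_sub_mem]
    exact hfin

lemma mycard_quot {A V : Type*} [CommRing A] (I : Ideal A) (hI : I.IsMaximal) [AddCommGroup V]
    [Module (A ⧸ I) V] [Fintype (A ⧸ I)] [Fintype V] (h : Module.finrank (A ⧸ I) V = 2) :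
    Fintype.card V = Fintype.card (A ⧸ I) ^ 2 := by
  haveI := hI
  rw [← h]
  exact @Module.card_eq_pow_finrank (A ⧸ I) V (Ideal.Quotient.field I).toDivisionRing _
    ‹Module (A ⧸ I) V› ‹Fintype (A ⧸ I)› ‹Fintype V›

end Helpers

set_option maxHeartbeats 1000000 in
set_option synthInstance.maxHeartbeats 400000 in
theorem statement9 (F K : Type*) [Field F] [Field K] [NumberField F] [NumberField K]
    [Algebra F K] [FiniteDimensional F K] [IsGalois F K]
    (hquad : Module.finrank F K = 2)
    (P : Ideal (𝓞 F)) (hP : P.IsPrime) (hP0 : P ≠ ⊥)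
    (p : ℕ) (hp : p.Prime) (hpodd : p ≠ 2) (hover : (p : 𝓞 F) ∈ P)
    -- `P` is ramified in `K`
    (hram : ∃ Q : Ideal (𝓞 K), Q.IsPrime ∧
      Ideal.map (algebraMap (𝓞 F) (𝓞 K)) P = Q ^ 2)
    (k : ℕ) (hk : 1 ≤ k) :
    -- the image of the map `(O_K/P^k O_K)^* → (O_F/P^k)^*` induced by the norm
    -- is a subgroup of index exactly 2
    2 * Nat.card {y : (𝓞 F ⧸ P ^ k)ˣ // ∃ β : 𝓞 K,
        IsUnit (Ideal.Quotient.mk (Ideal.map (algebraMap (𝓞 F) (𝓞 K)) (P ^ k)) β) ∧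
        Ideal.Quotient.mk (P ^ k) (RingOfIntegers.norm F β) = (y : 𝓞 F ⧸ P ^ k)}
      = Nat.card (𝓞 F ⧸ P ^ k)ˣ := by
  have hPmax : P.IsMaximal := hP.isMaximal hP0
  have h2P : (2 : 𝓞 F) ∉ P := by
    intro h2
    have hm : p = 2 * (p / 2) + 1 := by
      have h1 := Nat.div_add_mod p 2
      have h2 : p % 2 = 1 := Nat.odd_iff.mp (hp.odd_of_ne_two hpodd)
      omega
    have hpdiv : (p : 𝓞 F) = 2 * ((p / 2 : ℕ) : 𝓞 F) + 1 := by
      conv_lhs => rw [hm]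
      push_cast
      ring
    have h1 : (1 : 𝓞 F) ∈ P := by
      have he : (1 : 𝓞 F) = (p : 𝓞 F) - 2 * ((p / 2 : ℕ) : 𝓞 F) := by
        rw [hpdiv]; ring
      rw [he]
      exact sub_mem hover (Ideal.mul_mem_right _ _ h2)
    exact hPmax.ne_top (Ideal.eq_top_of_isUnit_mem _ h1 isUnit_one)
  have hPk0 : P ^ k ≠ ⊥ := by
    intro hbot
    obtain ⟨x, hxP, hx0⟩ := Submodule.exists_mem_ne_zero_of_ne_bot hP0
    have : x ^ k ∈ P ^ k := Ideal.pow_mem_pow hxP k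
    rw [hbot, Ideal.mem_bot] at this
    exact hx0 (pow_eq_zero_iff (by omega) |>.mp this)
  haveI : Fintype (𝓞 F ⧸ P ^ k) := @Fintype.ofFinite _ (Ideal.finiteQuotientOfFreeOfNeBot _ hPk0)
  set sq : (𝓞 F ⧸ P ^ k)ˣ →* (𝓞 F ⧸ P ^ k)ˣ := powMonoidHom 2 with hsq
  have hrange : ∀ y : (𝓞 F ⧸ P ^ k)ˣ, (∃ β : 𝓞 K,
      IsUnit (Ideal.Quotient.mk (Ideal.map (algebraMap (𝓞 F) (𝓞 K)) (P ^ k)) β) ∧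
      Ideal.Quotient.mk (P ^ k) (RingOfIntegers.norm F β) = (y : 𝓞 F ⧸ P ^ k))
      ↔ y ∈ sq.range := by
    obtain ⟨Q, hQ, hQ2⟩ := hram
    haveI := hPmax
    have halg_inj : Function.Injective (algebraMap (𝓞 F) (𝓞 K)) :=
      FaithfulSMul.algebraMap_injective _ _
    have hmapP_ne : Ideal.map (algebraMap (𝓞 F) (𝓞 K)) P ≠ ⊥ := by
      intro h
      exact hP0 ((Ideal.map_eq_bot_iff_of_injective halg_inj).mp h)
    have hQ0 : Q ≠ ⊥ := by
      intro h
      apply hmapP_ne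
      rw [hQ2, h]
      exact le_bot_iff.mp (Ideal.pow_le_self two_ne_zero)
    have hQmax : Q.IsMaximal := hQ.isMaximal hQ0
    have hQle : Ideal.map (algebraMap (𝓞 F) (𝓞 K)) P ≤ Q :=
      hQ2 ▸ Ideal.pow_le_self two_ne_zero
    have hPQ : P ≤ Ideal.comap (algebraMap (𝓞 F) (𝓞 K)) Q := Ideal.map_le_iff_le_comap.mp hQle
    have hcomap : Ideal.comap (algebraMap (𝓞 F) (𝓞 K)) Q = P := by
      refine (hPmax.eq_of_le ?_ hPQ).symm
      intro htop
      apply hQmax.ne_top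
      rw [Ideal.eq_top_iff_one]
      have : (1 : 𝓞 F) ∈ Ideal.comap (algebraMap (𝓞 F) (𝓞 K)) Q := htop ▸ trivial
      simpa using this
    haveI : Fintype (𝓞 F ⧸ P) := @Fintype.ofFinite _ (Ideal.finiteQuotientOfFreeOfNeBot _ hP0)
    haveI : Fintype (𝓞 K ⧸ Q) := @Fintype.ofFinite _ (Ideal.finiteQuotientOfFreeOfNeBot _ hQ0)
    haveI : Fintype (𝓞 K ⧸ Ideal.map (algebraMap (𝓞 F) (𝓞 K)) P) :=
      @Fintype.ofFinite _ (Ideal.finiteQuotientOfFreeOfNeBot _ hmapP_ne)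
    have hfinrank : Module.finrank (𝓞 F ⧸ P)
        (𝓞 K ⧸ Ideal.map (algebraMap (𝓞 F) (𝓞 K)) P) = 2 := by
      rw [Ideal.finrank_quotient_map (K := F) (L := K) P, hquad]
    have hcard2 : Nat.card (𝓞 K ⧸ Ideal.map (algebraMap (𝓞 F) (𝓞 K)) P)
        = Nat.card (𝓞 F ⧸ P) ^ 2 := by
      rw [Nat.card_eq_fintype_card, Nat.card_eq_fintype_card]
      exact mycard_quot P hPmax hfinrank
    have hcardQ : Nat.card (𝓞 K ⧸ Ideal.map (algebraMap (𝓞 F) (𝓞 K)) P)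
        = Nat.card (𝓞 K ⧸ Q) ^ 2 := by
      have h1 : Nat.card (𝓞 K ⧸ Q ^ 2) = Submodule.cardQuot (Q ^ 2) :=
        (Submodule.cardQuot_apply _).symm
      rw [hQ2, h1, cardQuot_pow_of_prime hQ0, Submodule.cardQuot_apply]
    have hcards : Nat.card (𝓞 K ⧸ Q) = Nat.card (𝓞 F ⧸ P) :=
      Nat.pow_left_injective (n := 2) (by omega) (by show Nat.card (𝓞 K ⧸ Q) ^ 2 = Nat.card (𝓞 F ⧸ P) ^ 2; rw [← hcardQ, hcard2])
    set φ := Ideal.quotientMap Q (algebraMap (𝓞 F) (𝓞 K)) hPQ with hφdef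
    haveI : Nontrivial (𝓞 K ⧸ Q) := Ideal.Quotient.nontrivial_iff.mpr hQmax.ne_top
    have hφinj : Function.Injective φ := Ideal.quotientMap_injective' hcomap.le
    have hφsurj : Function.Surjective φ := by
      have hbij := (Fintype.bijective_iff_injective_and_card φ).mpr
        ⟨hφinj, by rw [← Nat.card_eq_fintype_card, ← Nat.card_eq_fintype_card, hcards]⟩
      exact hbij.2
    intro y
    constructor
    · rintro ⟨β, -, hβn⟩
      obtain ⟨cbar, hcbar⟩ := hφsurj (Ideal.Quotient.mk Q β)
      obtain ⟨c, rfl⟩ := Ideal.Quotient.mk_surjective cbar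
      rw [hφdef, Ideal.quotientMap_mk] at hcbar
      have hβc : β - algebraMap (𝓞 F) (𝓞 K) c ∈ Q := by
        rw [← Ideal.Quotient.mk_eq_mk_iff_sub_mem]
        exact hcbar.symm
      have hstab : ∀ σ : K ≃ₐ[F] K, ∀ x ∈ Q, galRestrict (𝓞 F) F K (𝓞 K) σ x ∈ Q := by
        intro σ x hx
        set σ' := galRestrict (𝓞 F) F K (𝓞 K) σ with hσ'
        have hcomp : (σ' : 𝓞 K →+* 𝓞 K).comp (algebraMap (𝓞 F) (𝓞 K))
            = algebraMap (𝓞 F) (𝓞 K) := RingHom.ext (fun r => AlgEquiv.commutes σ' r)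
        have hmapstab : Ideal.map (σ' : 𝓞 K →+* 𝓞 K)
            (Ideal.map (algebraMap (𝓞 F) (𝓞 K)) P) = Ideal.map (algebraMap (𝓞 F) (𝓞 K)) P := by
          rw [Ideal.map_map, hcomp]
        have hxx : x * x ∈ Ideal.map (algebraMap (𝓞 F) (𝓞 K)) P := by
          rw [hQ2, pow_two]
          exact Ideal.mul_mem_mul hx hx
        have hx2 := Ideal.mem_map_of_mem (σ' : 𝓞 K →+* 𝓞 K) hxx
        rw [hmapstab, hQ2] at hx2
        refine hQ.mem_of_pow_mem 2 ?_
        have hmm : (σ' : 𝓞 K →+* 𝓞 K) (x * x) = σ' x ^ 2 := by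
          rw [map_mul]; ring_nf; rfl
        rw [← hmm]
        exact Ideal.pow_le_self two_ne_zero hx2
      have hσc : ∀ σ : K ≃ₐ[F] K, Ideal.Quotient.mk Q (galRestrict (𝓞 F) F K (𝓞 K) σ β)
          = Ideal.Quotient.mk Q (algebraMap (𝓞 F) (𝓞 K) c) := by
        intro σ
        rw [Ideal.Quotient.mk_eq_mk_iff_sub_mem]
        have h : galRestrict (𝓞 F) F K (𝓞 K) σ β - algebraMap (𝓞 F) (𝓞 K) c
            = galRestrict (𝓞 F) F K (𝓞 K) σ (β - algebraMap (𝓞 F) (𝓞 K) c) := by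
          rw [map_sub, AlgEquiv.commutes]
        rw [h]
        exact hstab σ _ hβc
      have hprod : algebraMap (𝓞 F) (𝓞 K) (RingOfIntegers.norm F β)
          = ∏ σ : K ≃ₐ[F] K, galRestrict (𝓞 F) F K (𝓞 K) σ β := by
        have hcoe : (algebraMap (𝓞 F) (𝓞 K) (RingOfIntegers.norm F β) : K)
            = ((∏ σ : K ≃ₐ[F] K, galRestrict (𝓞 F) F K (𝓞 K) σ β : 𝓞 K) : K) := by
          rw [RingOfIntegers.coe_algebraMap_norm, Algebra.norm_eq_prod_automorphisms]
          calc ∏ σ : K ≃ₐ[F] K, σ (β : K)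
              = ∏ σ : K ≃ₐ[F] K, (algebraMap (𝓞 K) K (galRestrict (𝓞 F) F K (𝓞 K) σ β)) := by
                refine Finset.prod_congr rfl (fun σ _ => ?_)
                rw [algebraMap_galRestrict_apply]
            _ = ((∏ σ : K ≃ₐ[F] K, galRestrict (𝓞 F) F K (𝓞 K) σ β : 𝓞 K) : K) := by
                rw [← map_prod]
        exact RingOfIntegers.eq_iff.mp hcoe
      have hcardaut : Fintype.card (K ≃ₐ[F] K) = 2 := by
        rw [← Nat.card_eq_fintype_card, IsGalois.card_aut_eq_finrank, hquad]
      have hnormc : (RingOfIntegers.norm F β : 𝓞 F) - c ^ 2 ∈ P := by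
        rw [← hcomap, Ideal.mem_comap, map_sub]
        rw [← Ideal.Quotient.mk_eq_mk_iff_sub_mem]
        calc Ideal.Quotient.mk Q (algebraMap (𝓞 F) (𝓞 K) (RingOfIntegers.norm F β))
            = Ideal.Quotient.mk Q (∏ σ : K ≃ₐ[F] K, galRestrict (𝓞 F) F K (𝓞 K) σ β) := by
              rw [hprod]
          _ = ∏ σ : K ≃ₐ[F] K, Ideal.Quotient.mk Q (galRestrict (𝓞 F) F K (𝓞 K) σ β) :=
              map_prod _ _ _
          _ = ∏ _σ : K ≃ₐ[F] K, Ideal.Quotient.mk Q (algebraMap (𝓞 F) (𝓞 K) c) :=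
              Finset.prod_congr rfl (fun σ _ => hσc σ)
          _ = Ideal.Quotient.mk Q (algebraMap (𝓞 F) (𝓞 K) c) ^ Fintype.card (K ≃ₐ[F] K) := by
              rw [Finset.prod_const, Finset.card_univ]
          _ = Ideal.Quotient.mk Q (algebraMap (𝓞 F) (𝓞 K) (c ^ 2)) := by
              rw [hcardaut, ← map_pow, ← map_pow]
      obtain ⟨z, hz⟩ := mysq hPmax (hp.odd_of_ne_two hpodd) hover hk y
        (RingOfIntegers.norm F β) c hβn hnormc
      exact ⟨z, hz⟩
    · rintro ⟨z, rfl⟩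
      obtain ⟨c, hc⟩ := Ideal.Quotient.mk_surjective (↑z : 𝓞 F ⧸ P ^ k)
      refine ⟨algebraMap (𝓞 F) (𝓞 K) c, ?_, ?_⟩
      · have h := Ideal.quotientMap_mk (H := Ideal.le_comap_map
          (f := algebraMap (𝓞 F) (𝓞 K)) (I := P ^ k)) (x := c)
        rw [← h, hc]
        exact z.isUnit.map _
      · rw [RingOfIntegers.norm_algebraMap, hquad, map_pow, hc]
        rfl
  rw [Nat.card_congr (Equiv.subtypeEquivRight hrange)]
  have hker : Nat.card sq.ker = 2 := by
    rw [Nat.card_eq_two_iff]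
    have hne : ((-1 : (𝓞 F ⧸ P ^ k)ˣ)) ≠ 1 := by
      intro h
      have hv : ((-1 : (𝓞 F ⧸ P ^ k)ˣ) : 𝓞 F ⧸ P ^ k)
          = ((1 : (𝓞 F ⧸ P ^ k)ˣ) : 𝓞 F ⧸ P ^ k) := congrArg Units.val h
      simp only [Units.val_neg, Units.val_one] at hv
      have h2q : (2 : 𝓞 F ⧸ P ^ k) = 0 := by linear_combination -hv
      have h2 : (2 : 𝓞 F) ∈ P ^ k := by
        rw [← Ideal.Quotient.eq_zero_iff_mem, map_ofNat, h2q]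
      exact h2P (Ideal.pow_le_self (by omega) h2)
    refine ⟨⟨1, sq.ker.one_mem⟩, ⟨-1, ?_⟩, ?_, ?_⟩
    · show sq (-1) = 1
      simp [hsq, powMonoidHom_apply]
    · intro h
      exact hne (by simpa using (Subtype.ext_iff.mp h).symm)
    · ext ⟨x, hx⟩
      simp only [Set.mem_insert_iff, Set.mem_singleton_iff, Set.mem_univ, iff_true]
      have hx2 : x ^ 2 = 1 := hx
      rcases mysqrone hPmax hk h2P x hx2 with h | h
      · left; exact Subtype.ext h
      · right; exact Subtype.ext h
  have hcard := Subgroup.card_eq_card_quotient_mul_card_subgroup sq.ker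
  rw [Nat.card_congr (QuotientGroup.quotientKerEquivRange sq).toEquiv, hker] at hcard
  rw [hcard, mul_comm]
end

section
/- Let p be a prime, d ≥ 1, and let A ∈ Sp(2d,𝔽_p) be a matrix whose characteristic polynomial factors as f·g, where f and g are distinct monic irreducible polynomials of degree d over 𝔽_p and g(X) = f(0)^{−1}·X^d·f(1/X) (that is, g is the normalized reciprocal polynomial of f; note f(0) ≠ 0 since A is invertible). Then the centralizer of A in Sp(2d,𝔽_p), namely {B ∈ Sp(2d,𝔽_p) : AB = BA}, has exactly p^d − 1 elements. -/
open Polynomial Matrix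

section Aux

variable {K L : Type*} [Field K] [Field L] {n : Type*} [Fintype n] [DecidableEq n]

lemma aux_pow_mulVec (M : Matrix n n L) (v : n → L) (μ : L) (h : M *ᵥ v = μ • v) (k : ℕ) :
    (M ^ k) *ᵥ v = μ ^ k • v := by
  induction k with
  | zero => simp
  | succ k ih =>
    rw [pow_succ', ← Matrix.mulVec_mulVec, ih, Matrix.mulVec_smul, h, smul_smul, pow_succ',
      mul_comm]

lemma aux_aeval_mulVec [Algebra K L] (M : Matrix n n L) (v : n → L) (μ : L)
    (h : M *ᵥ v = μ • v) (q : K[X]) :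
    (aeval M q) *ᵥ v = (aeval μ q) • v := by
  induction q using Polynomial.induction_on' with
  | add p q hp hq => rw [_root_.map_add, _root_.map_add, Matrix.add_mulVec, hp, hq, add_smul]
  | monomial k a =>
    have hmap : (algebraMap K (Matrix n n L)) a = (algebraMap K L a) • (1 : Matrix n n L) := by
      rw [Algebra.algebraMap_eq_smul_one]
      ext i j
      simp [Matrix.smul_apply, Algebra.smul_def]
    rw [aeval_monomial, aeval_monomial, ← Matrix.mulVec_mulVec, aux_pow_mulVec M v μ h,
      Matrix.mulVec_smul, hmap, Matrix.smul_mulVec, Matrix.one_mulVec, smul_comm,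
      smul_smul]

lemma aux_not_unit (A : Matrix n n K) (q : K[X]) (hq : q ∣ A.charpoly)
    (h0 : q.natDegree ≠ 0) : ¬ IsUnit (aeval A q) := by
  intro hu
  set L := A.charpoly.SplittingField
  have hchar0 : A.charpoly ≠ 0 := A.charpoly_monic.ne_zero
  have hsp : (q.map (algebraMap K L)).Splits :=
    (SplittingField.splits _).of_dvd (Polynomial.map_ne_zero hchar0) (Polynomial.map_dvd _ hq)
  have hdeg : q.degree ≠ 0 := by
    intro hdeg
    exact h0 (natDegree_eq_zero_iff_degree_le_zero.mpr (le_of_eq hdeg))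
  obtain ⟨μ, hμ⟩ := hsp.exists_eval_eq_zero (by rwa [degree_map])
  rw [eval_map] at hμ
  set A' : Matrix n n L := A.map (algebraMap K L) with hA'
  have hcharroot : (A'.charpoly).eval μ = 0 := by
    rw [Matrix.charpoly_map, eval_map]
    obtain ⟨s, hs⟩ := hq
    have key : ∀ c : K[X], c = q * s → eval₂ (algebraMap K L) μ c = 0 := by
      intro c hc
      rw [hc, eval₂_mul, hμ, zero_mul]
    exact key _ hs
  have hdet : ((Matrix.diagonal (fun _ : n => μ)) - A').det = 0 := by
    have : A'.charpoly.eval μ = ((Matrix.diagonal (fun _ : n => μ)) - A').det := by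
      rw [show A'.charpoly = (Matrix.charmatrix A').det from rfl, ← Polynomial.coe_evalRingHom,
        RingHom.map_det]
      congr 1
      ext i j
      by_cases hij : i = j <;>
        simp [hij, Matrix.charmatrix_apply, Matrix.diagonal_apply, Matrix.sub_apply]
    rw [← this, hcharroot]
  obtain ⟨v, hv0, hv⟩ := Matrix.exists_mulVec_eq_zero_iff.mpr hdet
  have heig : A' *ᵥ v = μ • v := by
    have h2 : (Matrix.diagonal (fun _ : n => μ)) *ᵥ v - A' *ᵥ v = 0 := by
      rw [← Matrix.sub_mulVec]; exact hv
    have h3 : (Matrix.diagonal (fun _ : n => μ)) *ᵥ v = μ • v := by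
      ext i; simp [Matrix.mulVec_diagonal]
    rw [h3] at h2
    linear_combination (norm := module) -h2
  have hkill : (aeval A' q) *ᵥ v = 0 := by
    rw [aux_aeval_mulVec A' v μ heig q]
    have : (aeval μ q) = 0 := by rwa [aeval_def]
    rw [this, zero_smul]
  have hu' : IsUnit (aeval A' q) := by
    have hAe : aeval A' q = (AlgHom.mapMatrix (Algebra.ofId K L)) (aeval A q) := by
      rw [← aeval_algHom_apply]
      rfl
    rw [hAe]
    exact hu.map _
  obtain ⟨u, hu''⟩ := hu'
  have hv' : v = 0 := by
    calc v = (1 : Matrix n n L) *ᵥ v := (Matrix.one_mulVec v).symm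
    _ = ((↑u⁻¹ : Matrix n n L) * (aeval A' q)) *ᵥ v := by rw [← hu'', u.inv_mul]
    _ = (↑u⁻¹ : Matrix n n L) *ᵥ ((aeval A' q) *ᵥ v) := by rw [Matrix.mulVec_mulVec]
    _ = 0 := by rw [hkill, Matrix.mulVec_zero]
  exact hv0 hv'

lemma aux_commute {R : Type*} [CommRing R] (A B : Matrix n n R) (h : A * B = B * A)
    (q : R[X]) : aeval A q * B = B * aeval A q := by
  induction q using Polynomial.induction_on' with
  | add p q hp hq => rw [_root_.map_add, add_mul, mul_add, hp, hq]
  | monomial k a =>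
    have hpow : A ^ k * B = B * A ^ k := by
      induction k with
      | zero => simp
      | succ k ih => rw [pow_succ, mul_assoc, h, ← mul_assoc, ih, mul_assoc]
    rw [aeval_monomial, mul_assoc, hpow, ← mul_assoc, ← mul_assoc,
      Algebra.commutes]

end Aux

/-- The standard symplectic matrix `J = [[0, I],[−I, 0]]` over a commutative ring `R`. -/
def Jmat (d : ℕ) (R : Type*) [CommRing R] :
    Matrix (Fin d ⊕ Fin d) (Fin d ⊕ Fin d) R :=
  Matrix.fromBlocks 0 1 (-1) 0

set_option maxHeartbeats 1600000 in
theorem statement16 (p : ℕ) (hp : p.Prime) (d : ℕ) (hd : 1 ≤ d)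
    (A : Matrix (Fin d ⊕ Fin d) (Fin d ⊕ Fin d) (ZMod p))
    -- `A ∈ Sp(2d, 𝔽_p)`
    (hA : A * Jmat d (ZMod p) * A.transpose = Jmat d (ZMod p))
    (f g : Polynomial (ZMod p))
    (hf : f.Monic) (hg : g.Monic) (hfirr : Irreducible f) (hgirr : Irreducible g)
    (hfd : f.natDegree = d) (hgd : g.natDegree = d) (hfg : f ≠ g)
    -- `g(X) = f(0)⁻¹ · X^d · f(1/X)`, the normalized reciprocal polynomial of `f`
    (hrecip : g = Polynomial.C (f.coeff 0)⁻¹ * f.reverse)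
    -- the characteristic polynomial of `A` factors as `f·g`
    (hcharpoly : A.charpoly = f * g) :
    Nat.card {B : Matrix (Fin d ⊕ Fin d) (Fin d ⊕ Fin d) (ZMod p) //
        B * Jmat d (ZMod p) * B.transpose = Jmat d (ZMod p) ∧ A * B = B * A}
      = p ^ d - 1 := by
  haveI : Fact p.Prime := ⟨hp⟩
  let K := ZMod p
  let n := (Fin d ⊕ Fin d)
  let J : Matrix n n K := Jmat d (ZMod p)
  show Nat.card {B : Matrix n n K // B * J * B.transpose = J ∧ A * B = B * A} = p ^ d - 1
  replace hA : A * J * A.transpose = J := hA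
  -- basic facts
  have hKcard : Fintype.card n = d + d := by simp [n, Fintype.card_sum]
  have hfne : f ≠ 0 := hf.ne_zero
  have hgne : g ≠ 0 := hg.ne_zero
  have hfc0 : f.coeff 0 ≠ 0 := by
    intro h
    rw [h, _root_.inv_zero, map_zero, zero_mul] at hrecip
    exact hgne hrecip
  have hfgcop : IsCoprime f g := by
    refine (hfirr.coprime_iff_not_dvd).mpr (fun hdvd => hfg ?_)
    exact eq_of_monic_of_associated hf hg (hfirr.associated_of_dvd hgirr hdvd)
  -- J facts
  have hJJ : J * J = -1 := by
    show Matrix.fromBlocks (0 : Matrix (Fin d) (Fin d) K) 1 (-1) 0 *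
      Matrix.fromBlocks 0 1 (-1) 0 = -1
    rw [Matrix.fromBlocks_multiply]
    have : (-1 : Matrix n n K) = Matrix.fromBlocks (-1) (-0) (-0) (-1) := by
      rw [← Matrix.fromBlocks_neg, Matrix.fromBlocks_one]
    rw [this]
    congr 1 <;> simp
  have hJmJ : J * (-J) = 1 := by rw [mul_neg, hJJ, neg_neg]
  have hmJJ : (-J) * J = 1 := by rw [neg_mul, hJJ, neg_neg]
  -- A is invertible
  have hdetJ : J.det ≠ 0 := by
    have h1 : J.det * (-J).det = 1 := by rw [← Matrix.det_mul, hJmJ, Matrix.det_one]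
    exact left_ne_zero_of_mul_eq_one h1
  have hdetA : IsUnit A.det := by
    have h1 : A.det * J.det * A.det = J.det := by
      have := congrArg Matrix.det hA
      rwa [Matrix.det_mul, Matrix.det_mul, Matrix.det_transpose] at this
    have h2 : (A.det * A.det) * J.det = 1 * J.det := by linear_combination h1
    exact IsUnit.of_mul_eq_one _ (mul_right_cancel₀ hdetJ h2)
  have hAAinv : A * A⁻¹ = 1 := Matrix.mul_nonsing_inv A hdetA
  have hAinvA : A⁻¹ * A = 1 := Matrix.nonsing_inv_mul A hdetA
  -- non-units
  have hnuf : ¬ IsUnit (aeval A f) := by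
    refine aux_not_unit A f ⟨g, hcharpoly⟩ ?_
    rw [hfd]; omega
  have hnug : ¬ IsUnit (aeval A g) := by
    refine aux_not_unit A g ⟨f, by rw [hcharpoly, mul_comm]⟩ ?_
    rw [hgd]; omega
  -- units from coprimality
  have hunit_of : ∀ q h' : K[X], Irreducible q → ¬ q ∣ h' → aeval A h' = 0 →
      IsUnit (aeval A q) := by
    intro q h' hqirr hnd hev
    obtain ⟨a, b, hab⟩ := (hqirr.coprime_iff_not_dvd).mpr hnd
    have h1 : aeval A a * aeval A q = 1 := by
      have := congrArg (aeval A) hab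
      rwa [_root_.map_add, _root_.map_mul, _root_.map_mul, hev, mul_zero, add_zero, _root_.map_one] at this
    exact ⟨⟨aeval A q, aeval A a, (mul_eq_one_comm).mp h1, h1⟩, rfl⟩
  -- annihilator
  have hannF : ∀ q : K[X], aeval A q = 0 → f * g ∣ q := by
    intro q hev
    have hfq : f ∣ q := by
      by_contra hnd
      exact hnuf (hunit_of f q hfirr hnd hev)
    have hgq : g ∣ q := by
      by_contra hnd
      exact hnug (hunit_of g q hgirr hnd hev)
    exact hfgcop.mul_dvd hfq hgq
  have hannB : ∀ q : K[X], f * g ∣ q → aeval A q = 0 := by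
    intro q ⟨s, hs⟩
    rw [hs, _root_.map_mul, ← hcharpoly, Matrix.aeval_self_charpoly, zero_mul]
  -- nonzero kernel vectors
  have hker : ∀ q : K[X], ¬ IsUnit (aeval A q) → ∃ w, w ≠ 0 ∧ (aeval A q) *ᵥ w = 0 := by
    intro q hq
    refine Matrix.exists_mulVec_eq_zero_iff.mpr ?_
    by_contra hdet
    exact hq ((Matrix.isUnit_iff_isUnit_det _).mpr (isUnit_iff_ne_zero.mpr hdet))
  obtain ⟨wf, hwf0, hwf⟩ := hker f hnuf
  obtain ⟨wg, hwg0, hwg⟩ := hker g hnug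
  -- killing lemma: if s(A) kills w and q(A) kills w, w ≠ 0, s irreducible then s ∣ q
  have hkill_dvd : ∀ (s q : K[X]) (w : n → K), Irreducible s → w ≠ 0 →
      (aeval A s) *ᵥ w = 0 → (aeval A q) *ᵥ w = 0 → s ∣ q := by
    intro s q w hsirr hw0 hsw hqw
    by_contra hnd
    obtain ⟨a, b, hab⟩ := (hsirr.coprime_iff_not_dvd).mpr hnd
    have : w = 0 := by
      calc w = (aeval A (a * s + b * q)) *ᵥ w := by rw [hab, _root_.map_one, Matrix.one_mulVec]
      _ = (aeval A a) *ᵥ ((aeval A s) *ᵥ w) + (aeval A b) *ᵥ ((aeval A q) *ᵥ w) := by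
          rw [_root_.map_add, _root_.map_mul, _root_.map_mul, Matrix.add_mulVec, Matrix.mulVec_mulVec,
            Matrix.mulVec_mulVec]
      _ = 0 := by rw [hsw, hqw, Matrix.mulVec_zero, Matrix.mulVec_zero, add_zero]
    exact hw0 this
  -- the cyclic vector
  set v : n → K := wf + wg with hv
  have hcyckill : ∀ q : K[X], (aeval A q) *ᵥ v = 0 → f * g ∣ q := by
    intro q hq
    have hsum : (aeval A q) *ᵥ wf + (aeval A q) *ᵥ wg = 0 := by
      rw [← Matrix.mulVec_add]; exact hq
    have hx1f : (aeval A f) *ᵥ ((aeval A q) *ᵥ wf) = 0 := by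
      rw [Matrix.mulVec_mulVec, ← _root_.map_mul, mul_comm, _root_.map_mul, ← Matrix.mulVec_mulVec, hwf,
        Matrix.mulVec_zero]
    have hx2g : (aeval A g) *ᵥ ((aeval A q) *ᵥ wg) = 0 := by
      rw [Matrix.mulVec_mulVec, ← _root_.map_mul, mul_comm, _root_.map_mul, ← Matrix.mulVec_mulVec, hwg,
        Matrix.mulVec_zero]
    have hx2 : (aeval A q) *ᵥ wg = -((aeval A q) *ᵥ wf) := by
      linear_combination (norm := module) hsum
    have hx1g : (aeval A g) *ᵥ ((aeval A q) *ᵥ wf) = 0 := by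
      have := hx2g
      rw [hx2, Matrix.mulVec_neg, neg_eq_zero] at this
      exact this
    -- x1 is killed by both f and g hence zero
    obtain ⟨a, b, hab⟩ := id hfgcop
    have hx10 : (aeval A q) *ᵥ wf = 0 := by
      calc (aeval A q) *ᵥ wf
          = (aeval A (a * f + b * g)) *ᵥ ((aeval A q) *ᵥ wf) := by
            rw [hab, _root_.map_one, Matrix.one_mulVec]
      _ = 0 := by
            rw [_root_.map_add, _root_.map_mul, _root_.map_mul, Matrix.add_mulVec,
              ← Matrix.mulVec_mulVec, ← Matrix.mulVec_mulVec, hx1f, hx1g,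
              Matrix.mulVec_zero, Matrix.mulVec_zero, add_zero]
    have hx20 : (aeval A q) *ᵥ wg = 0 := by rw [hx2, hx10, neg_zero]
    exact hfgcop.mul_dvd (hkill_dvd f q wf hfirr hwf0 hwf hx10)
      (hkill_dvd g q wg hgirr hwg0 hwg hx20)
  -- the linear map q ↦ q(A) v on polynomials of degree < d + d
  have hfgdeg : (f * g).natDegree = d + d := by
    rw [Polynomial.natDegree_mul hfne hgne, hfd, hgd]
  let Lmap : K[X] →ₗ[K] (n → K) :=
    { toFun := fun q => (aeval A q) *ᵥ v
      map_add' := by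
        intro q₁ q₂
        show (aeval A (q₁ + q₂)) *ᵥ v = (aeval A q₁) *ᵥ v + (aeval A q₂) *ᵥ v
        rw [_root_.map_add, Matrix.add_mulVec]
      map_smul' := by
        intro c q
        show (aeval A (c • q)) *ᵥ v = c • ((aeval A q) *ᵥ v)
        rw [_root_.map_smul, Matrix.smul_mulVec] }
  let L2 : Polynomial.degreeLT K (d + d) →ₗ[K] (n → K) :=
    Lmap.comp (Submodule.subtype (Polynomial.degreeLT K (d + d)))
  haveI : FiniteDimensional K (Polynomial.degreeLT K (d + d)) :=
    Module.Finite.equiv (Polynomial.degreeLTEquiv K (d + d)).symm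
  have hinj : Function.Injective L2 := by
    rw [injective_iff_map_eq_zero]
    rintro ⟨q, hqmem⟩ hq0
    have hq : (aeval A q) *ᵥ v = 0 := hq0
    have hdvd : f * g ∣ q := hcyckill q hq
    have : q = 0 := by
      refine Polynomial.eq_zero_of_dvd_of_degree_lt hdvd ?_
      calc q.degree < ((d + d : ℕ) : WithBot ℕ) := Polynomial.mem_degreeLT.mp hqmem
      _ = (f * g).degree := by
        rw [← hfgdeg, ← Polynomial.degree_eq_natDegree (mul_ne_zero hfne hgne)]
    exact Subtype.ext this
  have hfr : Module.finrank K (Polynomial.degreeLT K (d + d)) = Module.finrank K (n → K) := by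
    rw [(Polynomial.degreeLTEquiv K (d + d)).finrank_eq, Module.finrank_pi, Module.finrank_pi,
      Fintype.card_fin, hKcard]
  have hsurj : Function.Surjective L2 :=
    (LinearMap.injective_iff_surjective_of_finrank_eq_finrank hfr).mp hinj
  have hcyc : ∀ w : n → K, ∃ q : K[X], (aeval A q) *ᵥ v = w := by
    intro w
    obtain ⟨⟨q, _⟩, hq⟩ := hsurj w
    exact ⟨q, hq⟩
  -- the centralizer consists of polynomials in A
  have hcent : ∀ B : Matrix n n K, A * B = B * A → ∃ q : K[X], B = aeval A q := by
    intro B hB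
    obtain ⟨q, hq⟩ := hcyc (B *ᵥ v)
    refine ⟨q, ?_⟩
    have hvec : ∀ w : n → K, B *ᵥ w = (aeval A q) *ᵥ w := by
      intro w
      obtain ⟨s, hs⟩ := hcyc w
      calc B *ᵥ w = B *ᵥ ((aeval A s) *ᵥ v) := by rw [hs]
      _ = (B * aeval A s) *ᵥ v := by rw [Matrix.mulVec_mulVec]
      _ = (aeval A s * B) *ᵥ v := by rw [aux_commute A B hB s]
      _ = (aeval A s) *ᵥ (B *ᵥ v) := by rw [Matrix.mulVec_mulVec]
      _ = (aeval A s) *ᵥ ((aeval A q) *ᵥ v) := by rw [hq]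
      _ = (aeval A (s * q)) *ᵥ v := by rw [Matrix.mulVec_mulVec, _root_.map_mul]
      _ = (aeval A (q * s)) *ᵥ v := by rw [mul_comm s q]
      _ = (aeval A q) *ᵥ ((aeval A s) *ᵥ v) := by rw [Matrix.mulVec_mulVec, _root_.map_mul]
      _ = (aeval A q) *ᵥ w := by rw [hs]
    ext i j
    have h := hvec (Pi.single j 1)
    rw [Matrix.mulVec_single, Matrix.mulVec_single] at h
    simpa using congrFun h i
  -- A⁻¹ is a polynomial in A
  obtain ⟨r, hr⟩ : ∃ r : K[X], A⁻¹ = aeval A r := by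
    refine hcent A⁻¹ ?_
    rw [hAAinv, hAinvA]
  -- the map M ↦ J Mᵀ (-J) sends q(A) to q(A⁻¹)
  have hJA : J * Aᵀ * (-J) = A⁻¹ := by
    have h1 : J * Aᵀ = A⁻¹ * J := by
      calc J * Aᵀ = (A⁻¹ * A) * (J * Aᵀ) := by rw [hAinvA, one_mul]
      _ = A⁻¹ * (A * J * Aᵀ) := by noncomm_ring
      _ = A⁻¹ * J := by rw [hA]
    rw [h1, mul_assoc, hJmJ, mul_one]
  have hJApow : ∀ k : ℕ, J * (Aᵀ) ^ k * (-J) = (A⁻¹) ^ k := by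
    intro k
    induction k with
    | zero => simpa using hJmJ
    | succ k ih =>
      calc J * Aᵀ ^ (k + 1) * (-J) = (J * Aᵀ * (-J)) * (J * Aᵀ ^ k * (-J)) := by
            rw [pow_succ']
            calc J * (Aᵀ * Aᵀ ^ k) * (-J) = J * Aᵀ * ((-J) * J) * Aᵀ ^ k * (-J) := by
                  rw [hmJJ]; noncomm_ring
            _ = (J * Aᵀ * (-J)) * (J * Aᵀ ^ k * (-J)) := by noncomm_ring
      _ = A⁻¹ * (A⁻¹) ^ k := by rw [hJA, ih]
      _ = (A⁻¹) ^ (k + 1) := by rw [pow_succ']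
  have hψ : ∀ q : K[X], J * (aeval A q)ᵀ * (-J) = aeval A⁻¹ q := by
    intro q
    induction q using Polynomial.induction_on' with
    | add q₁ q₂ h1 h2 =>
      rw [_root_.map_add, Matrix.transpose_add, _root_.map_add, ← h1, ← h2]
      noncomm_ring
    | monomial k a =>
      have hsm : ∀ M : Matrix n n K, (algebraMap K (Matrix n n K)) a * M = a • M := by
        intro M
        rw [Algebra.algebraMap_eq_smul_one, smul_mul_assoc, one_mul]
      rw [aeval_monomial, aeval_monomial, hsm, hsm, Matrix.transpose_smul, Matrix.transpose_pow,
        ← hJApow k]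
      rw [Matrix.mul_smul, Matrix.smul_mul]
  -- symplectic condition for polynomials in A
  have hsympiff : ∀ (B : Matrix n n K) (q : K[X]), B = aeval A q →
      (B * J * Bᵀ = J ↔ aeval A (q * q.comp r) = 1) := by
    intro B q hB
    have hB2 : J * Bᵀ * (-J) = aeval A (q.comp r) := by
      rw [hB, hψ q, aeval_comp, ← hr]
    constructor
    · intro hs
      rw [_root_.map_mul, ← hB, ← hB2]
      calc B * (J * Bᵀ * (-J)) = (B * J * Bᵀ) * (-J) := by noncomm_ring
      _ = J * (-J) := by rw [hs]
      _ = 1 := hJmJ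
    · intro hs
      have h1 : B * (J * Bᵀ * (-J)) = 1 := by
        rw [hB2, hB, ← _root_.map_mul, hs]
      calc B * J * Bᵀ = B * J * Bᵀ * ((-J) * J) := by rw [hmJJ, mul_one]
      _ = (B * (J * Bᵀ * (-J))) * J := by noncomm_ring
      _ = J := by rw [h1, one_mul]
  -- the fields F = K[X]/(f) and G = K[X]/(g)
  haveI : Fact (Irreducible f) := ⟨hfirr⟩
  haveI : Fact (Irreducible g) := ⟨hgirr⟩
  let F := AdjoinRoot f
  let G := AdjoinRoot g
  let α : F := AdjoinRoot.root f
  let β : G := AdjoinRoot.root g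
  have hαroot : aeval α f = 0 := by
    rw [AdjoinRoot.aeval_eq, AdjoinRoot.mk_self]
  have hβroot : aeval β g = 0 := by
    rw [AdjoinRoot.aeval_eq, AdjoinRoot.mk_self]
  have hα0 : α ≠ 0 := by
    intro h
    rw [h, aeval_def, Polynomial.eval₂_at_zero] at hαroot
    exact hfc0 ((_root_.map_eq_zero (algebraMap K F)).mp hαroot)
  have hgc0 : g.coeff 0 ≠ 0 := by
    rw [hrecip, Polynomial.coeff_C_mul, Polynomial.coeff_zero_reverse, hf.leadingCoeff, mul_one]
    exact inv_ne_zero hfc0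
  have hβ0 : β ≠ 0 := by
    intro h
    rw [h, aeval_def, Polynomial.eval₂_at_zero] at hβroot
    exact hgc0 ((_root_.map_eq_zero (algebraMap K G)).mp hβroot)
  -- α⁻¹ is a root of g
  have hgα : aeval (α⁻¹) g = 0 := by
    haveI : Invertible α := invertibleOfNonzero hα0
    have hrev : eval₂ (algebraMap K F) (⅟α) f.reverse = 0 :=
      (Polynomial.eval₂_reverse_eq_zero_iff (algebraMap K F) α f).mpr (by rw [← aeval_def]; exact hαroot)
    rw [invOf_eq_inv] at hrev
    rw [hrecip, _root_.map_mul, aeval_C,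
      show (aeval (α⁻¹ : F)) f.reverse = 0 from by rw [aeval_def]; exact hrev, mul_zero]
  -- β⁻¹ is a root of f
  have hrevβ : aeval β f.reverse = 0 := by
    have hβ2 : aeval β (C (f.coeff 0)⁻¹ * f.reverse) = 0 := by rw [← hrecip]; exact hβroot
    rw [_root_.map_mul, aeval_C] at hβ2
    rcases mul_eq_zero.mp hβ2 with h | h
    · exact absurd ((_root_.map_eq_zero (algebraMap K G)).mp h) (inv_ne_zero hfc0)
    · exact h
  have hfβ : aeval (β⁻¹) f = 0 := by
    haveI : Invertible (β⁻¹ : G) := invertibleOfNonzero (inv_ne_zero hβ0)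
    have h2 : eval₂ (algebraMap K G) (⅟(β⁻¹)) f.reverse = 0 := by
      rw [invOf_eq_inv, inv_inv, ← aeval_def]
      exact hrevβ
    have h3 := (Polynomial.eval₂_reverse_eq_zero_iff (algebraMap K G) (β⁻¹) f).mp h2
    rw [aeval_def]
    exact h3
  -- the isomorphisms σ : G → F and τ : F → G
  let σ : G →ₐ[K] F := AdjoinRoot.liftAlgHom g (Algebra.ofId K F) (α⁻¹) hgα
  let τ : F →ₐ[K] G := AdjoinRoot.liftAlgHom f (Algebra.ofId K G) (β⁻¹) hfβ
  have hσβ : σ β = α⁻¹ := AdjoinRoot.liftAlgHom_root _ _ _ hgα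
  have hτα : τ α = β⁻¹ := AdjoinRoot.liftAlgHom_root _ _ _ hfβ
  have hστ : ∀ x : F, σ (τ x) = x := by
    have h1 : σ.comp τ = AlgHom.id K F := by
      refine AdjoinRoot.algHom_ext ?_
      rw [AlgHom.comp_apply, AlgHom.id_apply]
      show σ (τ α) = α
      rw [hτα, map_inv₀, hσβ, inv_inv]
    intro x
    exact DFunLike.congr_fun h1 x
  have hτσ : ∀ x : G, τ (σ x) = x := by
    have h1 : τ.comp σ = AlgHom.id K G := by
      refine AdjoinRoot.algHom_ext ?_
      rw [AlgHom.comp_apply, AlgHom.id_apply]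
      show τ (σ β) = β
      rw [hσβ, map_inv₀, hτα, inv_inv]
    intro x
    exact DFunLike.congr_fun h1 x
  -- the residues of r
  have hXr : aeval A (X * r - 1) = 0 := by
    rw [map_sub, _root_.map_mul, aeval_X, _root_.map_one, ← hr, hAAinv, sub_self]
  have hmkfr : AdjoinRoot.mk f r = α⁻¹ := by
    have h1 : f ∣ X * r - 1 := (dvd_mul_right f g).trans (hannF _ hXr)
    have h2 : AdjoinRoot.mk f (X * r - 1) = 0 := AdjoinRoot.mk_eq_zero.mpr h1
    rw [map_sub, _root_.map_mul, _root_.map_one, AdjoinRoot.mk_X, sub_eq_zero] at h2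
    exact eq_inv_of_mul_eq_one_right h2
  have hmkgr : AdjoinRoot.mk g r = β⁻¹ := by
    have h1 : g ∣ X * r - 1 := (dvd_mul_left g f).trans (hannF _ hXr)
    have h2 : AdjoinRoot.mk g (X * r - 1) = 0 := AdjoinRoot.mk_eq_zero.mpr h1
    rw [map_sub, _root_.map_mul, _root_.map_one, AdjoinRoot.mk_X, sub_eq_zero] at h2
    exact eq_inv_of_mul_eq_one_right h2
  -- residues of compositions
  have hmkfcomp : ∀ q : K[X], AdjoinRoot.mk f (q.comp r) = σ (AdjoinRoot.mk g q) := by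
    intro q
    calc AdjoinRoot.mk f (q.comp r)
        = aeval (AdjoinRoot.root f) (q.comp r) := (AdjoinRoot.aeval_eq _).symm
    _ = aeval (aeval (AdjoinRoot.root f) r) q := aeval_comp _
    _ = aeval (α⁻¹ : F) q := by rw [AdjoinRoot.aeval_eq, hmkfr]
    _ = aeval (σ β) q := by rw [hσβ]
    _ = σ (aeval β q) := aeval_algHom_apply σ β q
    _ = σ (AdjoinRoot.mk g q) := by rw [AdjoinRoot.aeval_eq]
  have hmkgcomp : ∀ q : K[X], AdjoinRoot.mk g (q.comp r) = τ (AdjoinRoot.mk f q) := by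
    intro q
    calc AdjoinRoot.mk g (q.comp r)
        = aeval (AdjoinRoot.root g) (q.comp r) := (AdjoinRoot.aeval_eq _).symm
    _ = aeval (aeval (AdjoinRoot.root g) r) q := aeval_comp _
    _ = aeval (β⁻¹ : G) q := by rw [AdjoinRoot.aeval_eq, hmkgr]
    _ = aeval (τ α) q := by rw [hτα]
    _ = τ (aeval α q) := aeval_algHom_apply τ α q
    _ = τ (AdjoinRoot.mk f q) := by rw [AdjoinRoot.aeval_eq]
  -- the key characterization
  have hkey : ∀ q : K[X], aeval A (q * q.comp r) = 1 ↔
      (AdjoinRoot.mk f q * σ (AdjoinRoot.mk g q) = 1 ∧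
       AdjoinRoot.mk g q * τ (AdjoinRoot.mk f q) = 1) := by
    intro q
    constructor
    · intro h
      have hdvd : f * g ∣ q * q.comp r - 1 :=
        hannF _ (by rw [map_sub, h, _root_.map_one, sub_self])
      constructor
      · have h2 := AdjoinRoot.mk_eq_zero.mpr ((dvd_mul_right f g).trans hdvd)
        rw [map_sub, _root_.map_mul, _root_.map_one, sub_eq_zero, hmkfcomp q] at h2
        exact h2
      · have h2 := AdjoinRoot.mk_eq_zero.mpr ((dvd_mul_left g f).trans hdvd)
        rw [map_sub, _root_.map_mul, _root_.map_one, sub_eq_zero, hmkgcomp q] at h2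
        exact h2
    · rintro ⟨h1, h2⟩
      have hf1 : f ∣ q * q.comp r - 1 := by
        rw [← AdjoinRoot.mk_eq_zero, map_sub, _root_.map_mul, _root_.map_one, sub_eq_zero,
          hmkfcomp q]
        exact h1
      have hg1 : g ∣ q * q.comp r - 1 := by
        rw [← AdjoinRoot.mk_eq_zero, map_sub, _root_.map_mul, _root_.map_one, sub_eq_zero,
          hmkgcomp q]
        exact h2
      have h3 := hannB _ (hfgcop.mul_dvd hf1 hg1)
      rw [map_sub, _root_.map_one, sub_eq_zero] at h3
      exact h3
  -- the bijection
  have hexq : ∀ B : {B : Matrix n n K // B * J * Bᵀ = J ∧ A * B = B * A},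
      ∃ q : K[X], B.1 = aeval A q := fun B => hcent B.1 B.2.2
  have hcond : ∀ (q : K[X]) (B : Matrix n n K), B * J * Bᵀ = J → B = aeval A q →
      (AdjoinRoot.mk f q * σ (AdjoinRoot.mk g q) = 1 ∧
       AdjoinRoot.mk g q * τ (AdjoinRoot.mk f q) = 1) :=
    fun q B hs he => (hkey q).mp ((hsympiff B q he).mp hs)
  let Θ : {B : Matrix n n K // B * J * Bᵀ = J ∧ A * B = B * A} → {u : F // u ≠ 0} :=
    fun B => ⟨AdjoinRoot.mk f (hexq B).choose,
      left_ne_zero_of_mul_eq_one (hcond _ B.1 B.2.1 (hexq B).choose_spec).1⟩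
  have hinjΘ : Function.Injective Θ := by
    intro B1 B2 h
    have h' : AdjoinRoot.mk f (hexq B1).choose = AdjoinRoot.mk f (hexq B2).choose :=
      congrArg Subtype.val h
    have hv1 := eq_inv_of_mul_eq_one_left (hcond _ B1.1 B1.2.1 (hexq B1).choose_spec).2
    have hv2 := eq_inv_of_mul_eq_one_left (hcond _ B2.1 B2.2.1 (hexq B2).choose_spec).2
    have h'' : AdjoinRoot.mk g (hexq B1).choose = AdjoinRoot.mk g (hexq B2).choose := by
      rw [hv1, hv2, h']
    have hdvd : f * g ∣ (hexq B1).choose - (hexq B2).choose :=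
      hfgcop.mul_dvd (AdjoinRoot.mk_eq_mk.mp h') (AdjoinRoot.mk_eq_mk.mp h'')
    have h3 := hannB _ hdvd
    rw [map_sub, sub_eq_zero] at h3
    apply Subtype.ext
    rw [(hexq B1).choose_spec, (hexq B2).choose_spec, h3]
  have hsurjΘ : Function.Surjective Θ := by
    rintro ⟨u, hu⟩
    obtain ⟨a, b, hab⟩ := id hfgcop
    obtain ⟨qu, hqu⟩ := AdjoinRoot.mk_surjective u
    obtain ⟨qv, hqv⟩ := AdjoinRoot.mk_surjective ((τ u)⁻¹ : G)
    set q : K[X] := qv * (a * f) + qu * (b * g) with hqdef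
    have hbg1 : AdjoinRoot.mk f b * AdjoinRoot.mk f g = 1 := by
      have h1 : AdjoinRoot.mk f (a * f + b * g) = 1 := by rw [hab, _root_.map_one]
      simpa only [_root_.map_add, _root_.map_mul, AdjoinRoot.mk_self, mul_zero, zero_add]
        using h1
    have haf1 : AdjoinRoot.mk g a * AdjoinRoot.mk g f = 1 := by
      have h1 : AdjoinRoot.mk g (a * f + b * g) = 1 := by rw [hab, _root_.map_one]
      simpa only [_root_.map_add, _root_.map_mul, AdjoinRoot.mk_self, mul_zero, add_zero]
        using h1
    have hqf : AdjoinRoot.mk f q = u := by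
      rw [hqdef]
      simp only [_root_.map_add, _root_.map_mul, AdjoinRoot.mk_self, mul_zero, zero_add]
      rw [hbg1, mul_one, hqu]
    have hqg : AdjoinRoot.mk g q = (τ u)⁻¹ := by
      rw [hqdef]
      simp only [_root_.map_add, _root_.map_mul, AdjoinRoot.mk_self, mul_zero, add_zero]
      rw [haf1, mul_one, hqv]
    have hτu : τ u ≠ 0 := fun h => hu (by
      have := congrArg σ h
      rwa [hστ, map_zero] at this)
    have hcnd : AdjoinRoot.mk f q * σ (AdjoinRoot.mk g q) = 1 ∧
        AdjoinRoot.mk g q * τ (AdjoinRoot.mk f q) = 1 := by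
      rw [hqf, hqg]
      constructor
      · rw [map_inv₀, hστ, mul_inv_cancel₀ hu]
      · rw [inv_mul_cancel₀ hτu]
    have hBs : aeval A q * J * (aeval A q)ᵀ = J :=
      (hsympiff (aeval (R := K) A q) q rfl).mpr ((hkey q).mpr hcnd)
    have hBc : A * aeval A q = aeval A q * A := by
      have h1 : (aeval A X : Matrix n n K) = A := aeval_X (R := K) A
      calc A * aeval A q = aeval A X * aeval A q := by rw [h1]
      _ = aeval A (X * q) := by rw [_root_.map_mul]
      _ = aeval A (q * X) := by rw [mul_comm]
      _ = aeval A q * A := by rw [_root_.map_mul, h1]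
    refine ⟨⟨aeval A q, hBs, hBc⟩, ?_⟩
    apply Subtype.ext
    show AdjoinRoot.mk f (hexq ⟨aeval A q, hBs, hBc⟩).choose = u
    have hspec := (hexq ⟨aeval A q, hBs, hBc⟩).choose_spec
    have h0 : aeval A ((hexq ⟨aeval A q, hBs, hBc⟩).choose - q) = 0 := by
      rw [map_sub, ← hspec, sub_self]
    have hdvd : f ∣ _ := (dvd_mul_right f g).trans (hannF _ h0)
    have := AdjoinRoot.mk_eq_mk.mpr hdvd
    rw [this, hqf]
  rw [Nat.card_eq_of_bijective Θ ⟨hinjΘ, hsurjΘ⟩]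
  -- counting
  have hdim : (AdjoinRoot.powerBasis hfne).dim = d := by
    rw [AdjoinRoot.powerBasis_dim, hfd]
  let e : F ≃ₗ[K] (Fin (AdjoinRoot.powerBasis hfne).dim → K) :=
    (AdjoinRoot.powerBasis hfne).basis.equivFun
  haveI : Finite F := Finite.of_equiv _ e.toEquiv.symm
  have hcardK : Nat.card K = p := Nat.card_zmod p
  have hcardF : Nat.card F = p ^ d := by
    rw [Nat.card_congr e.toEquiv, Nat.card_fun, hcardK, Nat.card_eq_fintype_card,
      Fintype.card_fin, hdim]
  have h1 : Nat.card {u : F // u ≠ 0} = Nat.card Fˣ := (Nat.card_congr unitsEquivNeZero).symm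
  haveI : Fintype F := Fintype.ofFinite F
  classical
  rw [h1, Nat.card_eq_fintype_card, Fintype.card_units, ← Nat.card_eq_fintype_card, hcardF]
end

section
/- Let E₀ ⊆ ℚ^{2d} be a linear subspace which is isotropic with respect to ω (that is, ω(u,v) = 0 for all u,v ∈ E₀), and let Z₀ = E₀ ∩ ℤ^{2d}. Then there exists x ∈ ℝ^{2d} such that n·x ≡ n₁·n₂ (mod 2) for every n = (n₁,n₂) ∈ Z₀; equivalently, there exists x₀ ∈ ℝ^{2d}/ℤ^{2d} such that n·x₀ ≡ (n₁·n₂)/2 (mod ℤ) for all n = (n₁,n₂) ∈ Z₀. -/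
open scoped BigOperators

/-- The standard symplectic form `ω(m,n) = m₁·n₂ − m₂·n₁` on `ℚ^{2d}`,
with coordinates indexed by `Fin d ⊕ Fin d`. -/
def sympQ {d : ℕ} (m n : (Fin d ⊕ Fin d) → ℚ) : ℚ :=
  (∑ i : Fin d, m (Sum.inl i) * n (Sum.inr i)) -
    (∑ i : Fin d, m (Sum.inr i) * n (Sum.inl i))

/-!
Reduce mod 2. On the lattice `Z₀` the quadratic form `q(n) = n₁·n₂` satisfies
`q(n + m) = q(n) + q(m) + ω(m, n) + 2 m₂·n₁`, so isotropy makes `q mod 2` additive; it vanishes on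
`2ℤ^{2d}`, hence factors through the image of `Z₀` in `(ℤ/2)^{2d}`. Extending it to a linear
functional on `(ℤ/2)^{2d}` gives `c` with `n·c ≡ q(n) (mod 2)` on `Z₀`, and any integral lift of `c`
is the required `x`.
-/

theorem AddMonoidHom.exists_zmodLinearMap_comp_eq_of_ker_le {p : ℕ} [Fact p.Prime]
    {A V W : Type*} [AddCommGroup A] [AddCommGroup V] [Module (ZMod p) V]
    [AddCommGroup W] [Module (ZMod p) W] (f : A →+ V) (q : A →+ W) (h : f.ker ≤ q.ker) :
    ∃ g : V →ₗ[ZMod p] W, ∀ a, g (f a) = q a := by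
  let S := AddSubgroup.toZModSubmodule p f.range
  let s : A →+ S := f.codRestrict S fun a => ⟨a, rfl⟩
  have hs : Function.Surjective s := by
    rintro ⟨_, a, rfl⟩
    exact ⟨a, rfl⟩
  have hker : s.ker ≤ q.ker := fun a ha => h (congrArg Subtype.val ha)
  let ψ : S →+ W := s.liftOfRightInverse _ (Function.rightInverse_surjInv hs) ⟨q, hker⟩
  obtain ⟨g, hg⟩ := LinearMap.exists_extend (ψ.toZModLinearMap p)
  refine ⟨g, fun a => ?_⟩
  calc g (f a) = ψ (s a) := LinearMap.congr_fun hg (s a)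
    _ = q a := s.liftOfRightInverse_comp_apply _ _ _ a

theorem Module.Dual.exists_dotProduct_eq {R ι : Type*} [CommSemiring R] [Fintype ι]
    [DecidableEq ι] (g : Module.Dual R (ι → R)) : ∃ c : ι → R, ∀ y, c ⬝ᵥ y = g y :=
  ⟨(dotProductEquiv R ι).symm g, fun y => by
    rw [← dotProductEquiv_apply_apply, LinearEquiv.apply_symm_apply]⟩

namespace Symplectic

variable {d : ℕ}

def quadForm (n : Fin d ⊕ Fin d → ℤ) : ℤ :=
  ∑ i : Fin d, n (Sum.inl i) * n (Sum.inr i)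

def sympZ (m n : Fin d ⊕ Fin d → ℤ) : ℤ :=
  (∑ i : Fin d, m (Sum.inl i) * n (Sum.inr i)) - ∑ i : Fin d, m (Sum.inr i) * n (Sum.inl i)

def latticePoints (E₀ : Submodule ℚ (Fin d ⊕ Fin d → ℚ)) : AddSubgroup (Fin d ⊕ Fin d → ℤ) :=
  E₀.toAddSubgroup.comap ((Int.castAddHom ℚ).compLeft _)

theorem sympQ_intCast (m n : Fin d ⊕ Fin d → ℤ) :
    sympQ (fun i => (m i : ℚ)) (fun i => (n i : ℚ)) = sympZ m n := by
  simp [sympQ, sympZ]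

theorem quadForm_add (m n : Fin d ⊕ Fin d → ℤ) :
    quadForm (m + n) =
      quadForm m + quadForm n + sympZ m n + 2 * ∑ i : Fin d, m (Sum.inr i) * n (Sum.inl i) := by
  simp only [quadForm, sympZ, Pi.add_apply, Finset.mul_sum, ← Finset.sum_sub_distrib,
    ← Finset.sum_add_distrib]
  exact Finset.sum_congr rfl fun i _ => by ring

theorem two_dvd_quadForm_of_forall_two_dvd {n : Fin d ⊕ Fin d → ℤ} (hn : ∀ i, 2 ∣ n i) :
    2 ∣ quadForm n :=
  Finset.dvd_sum fun i _ => (hn (Sum.inl i)).mul_right _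

def quadFormModTwo (E₀ : Submodule ℚ (Fin d ⊕ Fin d → ℚ))
    (hiso : ∀ u ∈ E₀, ∀ v ∈ E₀, sympQ u v = 0) : latticePoints E₀ →+ ZMod 2 where
  toFun n := (quadForm (n : Fin d ⊕ Fin d → ℤ) : ZMod 2)
  map_zero' := by simp [quadForm]
  map_add' m n := by
    have hmn : sympZ (m : Fin d ⊕ Fin d → ℤ) n = 0 := by
      have h : (sympZ (m : Fin d ⊕ Fin d → ℤ) n : ℚ) = 0 :=
        (sympQ_intCast _ _).symm.trans (hiso _ m.2 _ n.2)
      exact_mod_cast h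
    simp only [AddSubgroup.coe_add, quadForm_add, hmn]
    push_cast
    rw [show (2 : ZMod 2) = 0 from rfl]
    ring

theorem exists_dotProduct_eq_quadForm_modTwo (E₀ : Submodule ℚ (Fin d ⊕ Fin d → ℚ))
    (hiso : ∀ u ∈ E₀, ∀ v ∈ E₀, sympQ u v = 0) :
    ∃ c : Fin d ⊕ Fin d → ZMod 2, ∀ n ∈ latticePoints E₀,
      c ⬝ᵥ (fun i => (n i : ZMod 2)) = quadForm n := by
  let f : latticePoints E₀ →+ (Fin d ⊕ Fin d → ZMod 2) :=
    ((Int.castAddHom (ZMod 2)).compLeft _).comp (latticePoints E₀).subtype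
  have hker : f.ker ≤ (quadFormModTwo E₀ hiso).ker := fun n hn => by
    have hn2 : ∀ i, (2 : ℤ) ∣ (n : Fin d ⊕ Fin d → ℤ) i := fun i =>
      (ZMod.intCast_zmod_eq_zero_iff_dvd _ 2).mp (congrFun hn i)
    exact (ZMod.intCast_zmod_eq_zero_iff_dvd _ 2).mpr (two_dvd_quadForm_of_forall_two_dvd hn2)
  obtain ⟨g, hg⟩ := f.exists_zmodLinearMap_comp_eq_of_ker_le (p := 2) _ hker
  obtain ⟨c, hc⟩ := Module.Dual.exists_dotProduct_eq g
  exact ⟨c, fun n hn => (hc _).trans (hg ⟨n, hn⟩)⟩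

end Symplectic

open Symplectic in
theorem statement17_general (d : ℕ)
    (E₀ : Submodule ℚ ((Fin d ⊕ Fin d) → ℚ))
    -- `E₀` is isotropic with respect to `ω`
    (hiso : ∀ u ∈ E₀, ∀ v ∈ E₀, sympQ u v = 0) :
    -- there is `x ∈ ℝ^{2d}` with `n·x ≡ n₁·n₂ (mod 2)` for all `n ∈ Z₀ = E₀ ∩ ℤ^{2d}`
    ∃ x : (Fin d ⊕ Fin d) → ℝ,
      ∀ n : (Fin d ⊕ Fin d) → ℤ, (fun i => (n i : ℚ)) ∈ E₀ →
        ∃ m : ℤ, (∑ i : Fin d ⊕ Fin d, (n i : ℝ) * x i)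
          = ((∑ i : Fin d, n (Sum.inl i) * n (Sum.inr i) : ℤ) : ℝ) + 2 * (m : ℝ) := by
  obtain ⟨c, hc⟩ := exists_dotProduct_eq_quadForm_modTwo E₀ hiso
  refine ⟨fun i => ((c i).val : ℝ), fun n hn => ?_⟩
  have hmod : ((∑ i, n i * (c i).val : ℤ) : ZMod 2) = quadForm n := by
    rw [← hc n hn, dotProduct]
    push_cast
    simp only [ZMod.natCast_zmod_val, mul_comm]
  obtain ⟨m, hm⟩ := (ZMod.intCast_eq_intCast_iff_dvd_sub _ _ 2).mp hmod.symm
  refine ⟨m, ?_⟩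
  have hint : ∑ i, n i * ((c i).val : ℤ) = (∑ i, n (Sum.inl i) * n (Sum.inr i)) + 2 * m := by
    push_cast at hm
    rw [quadForm] at hm
    linarith
  beta_reduce
  exact_mod_cast hint

theorem statement17 (d : ℕ) (hd : 1 ≤ d)
    (E₀ : Submodule ℚ ((Fin d ⊕ Fin d) → ℚ))
    -- `E₀` is isotropic with respect to `ω`
    (hiso : ∀ u ∈ E₀, ∀ v ∈ E₀, sympQ u v = 0) :
    -- there is `x ∈ ℝ^{2d}` with `n·x ≡ n₁·n₂ (mod 2)` for all `n ∈ Z₀ = E₀ ∩ ℤ^{2d}`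
    ∃ x : (Fin d ⊕ Fin d) → ℝ,
      ∀ n : (Fin d ⊕ Fin d) → ℤ, (fun i => (n i : ℚ)) ∈ E₀ →
        ∃ m : ℤ, (∑ i : Fin d ⊕ Fin d, (n i : ℝ) * x i)
          = ((∑ i : Fin d, n (Sum.inl i) * n (Sum.inr i) : ℤ) : ℝ) + 2 * (m : ℝ) :=
  statement17_general d E₀ hiso
end

section
/- Let F be a field, let ω be the standard symplectic form on V = F^{2d}, and let A : V → V be a symplectic linear map (ω(Au,Av) = ω(u,v) for all u,v) whose characteristic polynomial P has no repeated roots in an algebraic closure of F. Let p and q be monic irreducible factors of P over F, and set p*(X) = p(0)^{−1}·X^{deg p}·p(1/X), the normalized reciprocal polynomial of p (note p(0) ≠ 0 since A is invertible). If q ≠ p*, then ω(u,w) = 0 for all u ∈ ker p(A) and all w ∈ ker q(A). -/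
/-!
Since `A` preserves `ω`, moving powers of `A` across the form gives
`ω(r(A) u, A^(deg r) v) = ω(u, r.reverse(A) v)`, so `ker p(A)` is `ω`-orthogonal to the image of
`p.reverse(A)`. The reversal of an irreducible `p` with `p(0) ≠ 0` is again irreducible (reversal
agrees with the multiplicative involution `mirror`), so a monic irreducible `q` other than its
monic associate `p*` is coprime to it; hence `ker q(A)` lies in the image of `p.reverse(A)`.
-/

open scoped BigOperators

/-- The standard symplectic form `ω(m,n) = m₁·n₂ − m₂·n₁` on `F^{2d}`,
with coordinates indexed by `Fin d ⊕ Fin d`. -/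
def sympF {d : ℕ} {F : Type*} [Field F] (m n : (Fin d ⊕ Fin d) → F) : F :=
  (∑ i : Fin d, m (Sum.inl i) * n (Sum.inr i)) -
    (∑ i : Fin d, m (Sum.inr i) * n (Sum.inl i))

open Polynomial

namespace LinearMap.IsOrthogonal

variable {R M : Type*} [CommRing R] [AddCommGroup M] [Module R M]
  {B : LinearMap.BilinForm R M} {A : Module.End R M}

lemma apply_pow_apply_pow (hA : B.IsOrthogonal A) (k : ℕ) (u v : M) :
    B ((A ^ k) u) ((A ^ k) v) = B u v := by
  induction k generalizing u v with
  | zero => simp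
  | succ k ih => rw [pow_succ, Module.End.mul_apply, Module.End.mul_apply, ih, hA]

lemma apply_pow_apply_pow_of_le (hA : B.IsOrthogonal A) {i n : ℕ} (hin : i ≤ n) (u v : M) :
    B ((A ^ i) u) ((A ^ n) v) = B u ((A ^ (n - i)) v) := by
  obtain ⟨k, rfl⟩ := Nat.exists_eq_add_of_le hin
  rw [pow_add, Module.End.mul_apply, hA.apply_pow_apply_pow, Nat.add_sub_cancel_left]

lemma apply_aeval_apply_pow (hA : B.IsOrthogonal A) {r : R[X]} {n : ℕ} (hr : r.natDegree ≤ n)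
    (u v : M) : B (aeval A r u) ((A ^ n) v) = B u (aeval A (r.reflect n) v) := by
  have hrefl : (r.reflect n).natDegree < n + 1 :=
    Nat.lt_succ_of_le (natDegree_reflect_le.trans (max_le le_rfl hr))
  rw [aeval_eq_sum_range' (Nat.lt_succ_of_le hr), aeval_eq_sum_range' hrefl,
    ← Finset.sum_range_reflect]
  simp only [LinearMap.sum_apply, map_sum, LinearMap.smul_apply, map_smul]
  refine Finset.sum_congr rfl fun i hi => ?_
  have hin : i ≤ n := Nat.lt_succ_iff.mp (Finset.mem_range.mp hi)
  rw [Nat.succ_sub_one, hA.apply_pow_apply_pow_of_le (Nat.sub_le n i), Nat.sub_sub_self hin,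
    coeff_reflect, revAt_le hin]

lemma apply_eq_zero_of_mem_ker_of_mem_range (hA : B.IsOrthogonal A) {r : R[X]} {u w : M}
    (hu : u ∈ LinearMap.ker (aeval A r)) (hw : w ∈ LinearMap.range (aeval A r.reverse)) :
    B u w = 0 := by
  obtain ⟨v, rfl⟩ := hw
  rw [reverse, ← hA.apply_aeval_apply_pow le_rfl, LinearMap.mem_ker.mp hu, map_zero,
    LinearMap.zero_apply]

end LinearMap.IsOrthogonal

namespace Polynomial

theorem ker_aeval_le_range_aeval_of_isCoprime {R M : Type*} [CommRing R] [AddCommGroup M]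
    [Module R M] (f : M →ₗ[R] M) {p q : R[X]} (hpq : IsCoprime p q) :
    LinearMap.ker (aeval f p) ≤ LinearMap.range (aeval f q) := by
  intro v hv
  obtain ⟨a, b, hab⟩ := hpq
  refine ⟨aeval f b v, ?_⟩
  simpa [mul_comm b q, LinearMap.mem_ker.mp hv] using congr_arg (fun r => aeval f r v) hab

noncomputable def mirrorMulEquiv (R : Type*) [Semiring R] [NoZeroDivisors R] : R[X] ≃* R[X] where
  toFun := mirror
  invFun := mirror
  left_inv := mirror_involutive
  right_inv := mirror_involutive
  map_mul' p q := mirror_mul_of_domain p q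

lemma reverse_eq_mirror {R : Type*} [Semiring R] {p : R[X]} (h0 : p.coeff 0 ≠ 0) :
    p.reverse = p.mirror := by
  rw [mirror, natTrailingDegree_eq_zero.mpr (Or.inr h0), pow_zero, mul_one]

lemma Irreducible.reverse {R : Type*} [CommRing R] [NoZeroDivisors R] {p : R[X]}
    (hp : Irreducible p) (h0 : p.coeff 0 ≠ 0) : Irreducible p.reverse := by
  rw [reverse_eq_mirror h0]
  exact (MulEquiv.irreducible_iff (mirrorMulEquiv R)).mpr hp

variable {K : Type*} [Field K]

lemma eq_C_inv_mul_reverse_of_dvd {p q : K[X]} (hpirr : Irreducible p) (hp0 : p.coeff 0 ≠ 0)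
    (hq : q.Monic) (hqirr : Irreducible q) (hdvd : q ∣ p.reverse) :
    q = C (p.coeff 0)⁻¹ * p.reverse := by
  have hlead : p.reverse.leadingCoeff = p.coeff 0 := by
    rw [reverse_leadingCoeff, trailingCoeff_eq_coeff_zero hp0]
  refine eq_of_monic_of_associated hq ?_ ?_
  · exact monic_C_mul_of_mul_leadingCoeff_eq_one (by rw [hlead, inv_mul_cancel₀ hp0])
  · exact (hqirr.associated_of_dvd (hpirr.reverse hp0) hdvd).trans
      (associated_unit_mul_left _ _ (isUnit_C.mpr (isUnit_iff_ne_zero.mpr (inv_ne_zero hp0)))).symm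

lemma isCoprime_reverse_of_ne {p q : K[X]} (hp : p.Monic) (hpirr : Irreducible p)
    (hq : q.Monic) (hqirr : Irreducible q) (hne : q ≠ C (p.coeff 0)⁻¹ * p.reverse) :
    IsCoprime q p.reverse := by
  by_cases hp0 : p.coeff 0 = 0
  · have hpX : p = X := eq_of_monic_of_associated hp monic_X
      (irreducible_X.associated_of_dvd hpirr (X_dvd_iff.mpr hp0)).symm
    rw [hpX, ← one_mul X, reverse_mul_X, ← C_1, reverse_C]
    exact isCoprime_one_right
  · exact (hqirr.coprime_iff_not_dvd).mpr
      fun hdvd => hne (eq_C_inv_mul_reverse_of_dvd hpirr hp0 hq hqirr hdvd)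

end Polynomial

noncomputable def sympBilinForm (d : ℕ) (F : Type*) [Field F] :
    LinearMap.BilinForm F (Fin d ⊕ Fin d → F) :=
  LinearMap.mk₂ F sympF
    (fun _ _ _ => by simp only [sympF, Pi.add_apply, add_mul, Finset.sum_add_distrib]; ring)
    (fun _ _ _ => by
      simp only [sympF, Pi.smul_apply, smul_eq_mul, mul_sub, Finset.mul_sum, mul_assoc])
    (fun _ _ _ => by simp only [sympF, Pi.add_apply, mul_add, Finset.sum_add_distrib]; ring)
    (fun _ _ _ => by
      simp only [sympF, Pi.smul_apply, smul_eq_mul, mul_sub, Finset.mul_sum, mul_left_comm])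

theorem statement18_general (d : ℕ) (F : Type*) [Field F]
    (A : ((Fin d ⊕ Fin d) → F) →ₗ[F] ((Fin d ⊕ Fin d) → F))
    -- `A` is symplectic
    (hA : ∀ u v : (Fin d ⊕ Fin d) → F, sympF (A u) (A v) = sympF u v)
    (p q : Polynomial F)
    (hp : p.Monic) (hq : q.Monic) (hpirr : Irreducible p) (hqirr : Irreducible q)
    -- `q` is not the normalized reciprocal polynomial `p* = p(0)⁻¹ X^{deg p} p(1/X)` of `p`
    (hne : q ≠ Polynomial.C (p.coeff 0)⁻¹ * p.reverse) :
    ∀ u ∈ LinearMap.ker (Polynomial.aeval A p),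
      ∀ w ∈ LinearMap.ker (Polynomial.aeval A q),
        sympF u w = 0 := by
  have hAorth : (sympBilinForm d F).IsOrthogonal A := hA
  intro u hu w hw
  exact hAorth.apply_eq_zero_of_mem_ker_of_mem_range hu
    (ker_aeval_le_range_aeval_of_isCoprime A (isCoprime_reverse_of_ne hp hpirr hq hqirr hne) hw)

theorem statement18 (d : ℕ) (hd : 1 ≤ d) (F : Type*) [Field F]
    (A : ((Fin d ⊕ Fin d) → F) →ₗ[F] ((Fin d ⊕ Fin d) → F))
    -- `A` is symplectic
    (hA : ∀ u v : (Fin d ⊕ Fin d) → F, sympF (A u) (A v) = sympF u v)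
    -- the characteristic polynomial of `A` has no repeated roots in an algebraic closure
    (hsqfree : Squarefree
      ((LinearMap.charpoly A).map (algebraMap F (AlgebraicClosure F))))
    (p q : Polynomial F)
    (hp : p.Monic) (hq : q.Monic) (hpirr : Irreducible p) (hqirr : Irreducible q)
    (hpdvd : p ∣ LinearMap.charpoly A) (hqdvd : q ∣ LinearMap.charpoly A)
    -- `q` is not the normalized reciprocal polynomial `p* = p(0)⁻¹ X^{deg p} p(1/X)` of `p`
    (hne : q ≠ Polynomial.C (p.coeff 0)⁻¹ * p.reverse) :
    ∀ u ∈ LinearMap.ker (Polynomial.aeval A p),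
      ∀ w ∈ LinearMap.ker (Polynomial.aeval A q),
        sympF u w = 0 :=
  statement18_general d F A hA p q hp hq hpirr hqirr hne
end
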